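/- arXiv:2505.03943 — 5 statements merged into one kernel-verified Lean document; each statement's English description precedes it below -/
import Mathlib

section
/- The Faà di Bruno Hopf algebra ℬ = ℤ/2[h₀^{±1}, h₁, ...] represents the group-valued functor R ↦ (group of power series f ∈ xR[[x]] with invertible linear coefficient, under substitution): ring homomorphisms ℬ → R correspond naturally and bijectively to such series, and this bijection takes convolution product (dual to δ) to composition of series. -/
open scoped TensorProduct

/-- Substitution (composition) of formal power series: `comp f g = f(g(x))`. -/
noncomputable def comp {R : Type*} [CommRing R] (f g : PowerSeries R) : PowerSeries R :=
  PowerSeries.mk fun n =>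
    ∑ k ∈ Finset.range (n + 1), PowerSeries.coeff k f * PowerSeries.coeff n (g ^ k)

/-- The Faà di Bruno Hopf algebra `ℬ = ℤ/2[h₀^{±1}, h₁, h₂, ...]` (as a ring). -/
noncomputable abbrev FaaDiBruno : Type :=
  Localization.Away (MvPolynomial.X 0 : MvPolynomial ℕ (ZMod 2))

/-- The generator `hₙ` of the Faà di Bruno Hopf algebra. -/
noncomputable def hgen (n : ℕ) : FaaDiBruno :=
  algebraMap (MvPolynomial ℕ (ZMod 2)) FaaDiBruno (MvPolynomial.X n)

/-- The power series `h(x) = Σₙ hₙ x^{n+1}` over `ℬ`. -/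
noncomputable def hSeries : PowerSeries FaaDiBruno :=
  PowerSeries.mk fun n => if n = 0 then 0 else hgen (n - 1)

/-- The power series `Σₙ φ(hₙ) x^{n+1}` associated to a ring homomorphism `φ : ℬ → R`. -/
noncomputable def toSeries {R : Type*} [CommRing R] [Algebra (ZMod 2) R]
    (φ : FaaDiBruno →ₐ[ZMod 2] R) : PowerSeries R :=
  PowerSeries.mk fun n => if n = 0 then 0 else φ (hgen (n - 1))


lemma map_comp_aux {R S : Type*} [CommRing R] [CommRing S] (θ : R →+* S)
    (f g : PowerSeries R) :
    PowerSeries.map θ (comp f g) = comp (PowerSeries.map θ f) (PowerSeries.map θ g) := by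
  ext n
  simp [comp, ← map_pow]

lemma pmap_pmap {R S T : Type*} [CommRing R] [CommRing S] [CommRing T]
    (f : R →+* S) (g : S →+* T) (p : PowerSeries R) :
    PowerSeries.map g (PowerSeries.map f p) = PowerSeries.map (g.comp f) p := by
  ext n; simp

lemma key_comp {A B S : Type*} [CommRing A] [CommRing B] [CommRing S]
    (p : PowerSeries A) (d l r : A →+* B) (θ : B →+* S)
    (h : PowerSeries.map d p = comp (PowerSeries.map l p) (PowerSeries.map r p)) :
    PowerSeries.map (θ.comp d) p =
      comp (PowerSeries.map (θ.comp l) p) (PowerSeries.map (θ.comp r) p) := by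
  rw [← pmap_pmap d θ, h, map_comp_aux, pmap_pmap, pmap_pmap]

lemma hgen_isUnit : IsUnit (hgen 0) :=
  IsLocalization.Away.algebraMap_isUnit (MvPolynomial.X 0 : MvPolynomial ℕ (ZMod 2))

lemma toSeries_eq_map {R : Type*} [CommRing R] [Algebra (ZMod 2) R]
    (φ : FaaDiBruno →ₐ[ZMod 2] R) :
    toSeries φ = PowerSeries.map φ.toRingHom hSeries := by
  ext n; cases n <;> simp [toSeries, hSeries]

/-- The Faà di Bruno Hopf algebra `ℬ = ℤ/2[h₀^{±1}, h₁, ...]` represents the group-valued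
functor `R ↦` (group of power series `f ∈ xR[[x]]` with invertible linear coefficient, under
substitution): ring homomorphisms `ℬ → R` correspond naturally and bijectively to such
series, and this bijection takes convolution product (dual to `δ`) to composition. -/
theorem faaDiBruno_represents {R : Type*} [CommRing R] [Algebra (ZMod 2) R]
    (δ : FaaDiBruno →ₐ[ZMod 2] FaaDiBruno ⊗[ZMod 2] FaaDiBruno)
    (hδ : PowerSeries.map δ.toRingHom hSeries =
      comp (PowerSeries.map (Algebra.TensorProduct.includeLeft :
              FaaDiBruno →ₐ[ZMod 2] FaaDiBruno ⊗[ZMod 2] FaaDiBruno).toRingHom hSeries)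
           (PowerSeries.map (Algebra.TensorProduct.includeRight :
              FaaDiBruno →ₐ[ZMod 2] FaaDiBruno ⊗[ZMod 2] FaaDiBruno).toRingHom hSeries)) :
    (∀ φ : FaaDiBruno →ₐ[ZMod 2] R,
      PowerSeries.constantCoeff (toSeries φ) = 0 ∧
        IsUnit (PowerSeries.coeff 1 (toSeries φ))) ∧
    (∀ f : PowerSeries R, PowerSeries.constantCoeff f = 0 →
      IsUnit (PowerSeries.coeff 1 f) →
        ∃! φ : FaaDiBruno →ₐ[ZMod 2] R, toSeries φ = f) ∧
    (∀ φ ψ : FaaDiBruno →ₐ[ZMod 2] R,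
      toSeries (((Algebra.TensorProduct.lmul' (ZMod 2)).comp
          ((Algebra.TensorProduct.map φ ψ).comp δ))) =
        comp (toSeries φ) (toSeries ψ)) := by
  refine ⟨?_, ?_, ?_⟩
  · intro φ
    constructor
    · simp [toSeries, ← PowerSeries.coeff_zero_eq_constantCoeff]
    · simpa [toSeries] using hgen_isUnit.map φ
  · intro f h0 h1
    set g : MvPolynomial ℕ (ZMod 2) →+* R :=
      (MvPolynomial.aeval fun n => PowerSeries.coeff (n + 1) f).toRingHom with hg
    have hgu : IsUnit (g (MvPolynomial.X 0)) := by simpa [hg] using h1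
    set L : FaaDiBruno →+* R :=
      IsLocalization.Away.lift (MvPolynomial.X 0 : MvPolynomial ℕ (ZMod 2)) hgu with hL
    have hLa : ∀ n, L (hgen n) = PowerSeries.coeff (n + 1) f := by
      intro n
      rw [hgen, hL, IsLocalization.Away.lift_eq]
      simp [hg]
    refine ⟨{ toRingHom := L,
              commutes' := fun r => RingHom.congr_fun
                (RingHom.ext_zmod (L.comp (algebraMap (ZMod 2) FaaDiBruno))
                  (algebraMap (ZMod 2) R)) r }, ?_, ?_⟩
    · ext n
      cases n with
      | zero => simpa [toSeries, ← PowerSeries.coeff_zero_eq_constantCoeff] using h0.symm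
      | succ n => simpa [toSeries] using hLa n
    · intro ψ hψ
      have hψa : ∀ n, ψ (hgen n) = PowerSeries.coeff (n + 1) f := by
        intro n
        have := congrArg (PowerSeries.coeff (n + 1)) hψ
        simpa [toSeries] using this
      have hring : ψ.toRingHom = L := by
        apply IsLocalization.ringHom_ext
          (Submonoid.powers (MvPolynomial.X 0 : MvPolynomial ℕ (ZMod 2)))
        apply MvPolynomial.ringHom_ext
        · intro r
          exact RingHom.congr_fun (RingHom.ext_zmod
            ((ψ.toRingHom.comp (algebraMap (MvPolynomial ℕ (ZMod 2)) FaaDiBruno)).comp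
              MvPolynomial.C)
            ((L.comp (algebraMap (MvPolynomial ℕ (ZMod 2)) FaaDiBruno)).comp
              MvPolynomial.C)) r
        · intro n
          simp only [RingHom.coe_comp, Function.comp_apply]
          rw [show (algebraMap (MvPolynomial ℕ (ZMod 2)) FaaDiBruno) (MvPolynomial.X n) = hgen n
            from rfl]
          rw [hLa n]
          exact hψa n
      exact AlgHom.ext fun x => RingHom.congr_fun hring x
  · intro φ ψ
    set θ : FaaDiBruno ⊗[ZMod 2] FaaDiBruno →ₐ[ZMod 2] R :=
      (Algebra.TensorProduct.lmul' (ZMod 2)).comp (Algebra.TensorProduct.map φ ψ) with hθ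
    have h1 : θ.comp Algebra.TensorProduct.includeLeft = φ := by
      rw [hθ, AlgHom.comp_assoc, Algebra.TensorProduct.map_comp_includeLeft,
        ← AlgHom.comp_assoc, Algebra.TensorProduct.lmul'_comp_includeLeft, AlgHom.id_comp]
    have h2 : θ.comp Algebra.TensorProduct.includeRight = ψ := by
      rw [hθ, AlgHom.comp_assoc, Algebra.TensorProduct.map_comp_includeRight,
        ← AlgHom.comp_assoc, Algebra.TensorProduct.lmul'_comp_includeRight, AlgHom.id_comp]
    have key := key_comp hSeries δ.toRingHom
      (Algebra.TensorProduct.includeLeft :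
          FaaDiBruno →ₐ[ZMod 2] FaaDiBruno ⊗[ZMod 2] FaaDiBruno).toRingHom
      (Algebra.TensorProduct.includeRight :
          FaaDiBruno →ₐ[ZMod 2] FaaDiBruno ⊗[ZMod 2] FaaDiBruno).toRingHom
      θ.toRingHom hδ
    have e1 : θ.toRingHom.comp (Algebra.TensorProduct.includeLeft :
        FaaDiBruno →ₐ[ZMod 2] FaaDiBruno ⊗[ZMod 2] FaaDiBruno).toRingHom = φ.toRingHom :=
      congrArg AlgHom.toRingHom h1
    have e2 : θ.toRingHom.comp (Algebra.TensorProduct.includeRight :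
        FaaDiBruno →ₐ[ZMod 2] FaaDiBruno ⊗[ZMod 2] FaaDiBruno).toRingHom = ψ.toRingHom :=
      congrArg AlgHom.toRingHom h2
    rw [e1, e2] at key
    rw [toSeries_eq_map, toSeries_eq_map φ, toSeries_eq_map ψ]
    exact key
end

section
/- In the ring 𝒜[[t]] with 𝒜 = ℤ/2[ξ₀^{±1}, ξ₁, ...], the identity Q_t(ξ₀) = ξ₀ · Σᵢ ξᵢ t^{2^i - 1} is forced by the relation Q_t(ξ)(x(x+t)) = ξ(x)ξ(x+t), by comparing lowest-order coefficients in x. -/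
/-- Substitution of power series `a i` for the variables of a multivariate power series `f`;
correct when each `a i` has zero constant coefficient. -/
noncomputable def msubst {R : Type*} [CommRing R] {m l : ℕ}
    (a : Fin m → MvPowerSeries (Fin l) R) (f : MvPowerSeries (Fin m) R) :
    MvPowerSeries (Fin l) R :=
  fun e => ∑ d ∈ Fintype.piFinset (fun _ : Fin m => Finset.range ((e.sum fun _ k => k) + 1)),
    MvPowerSeries.coeff (Finsupp.equivFunOnFinite.symm d) f *
      MvPowerSeries.coeff e (∏ i, a i ^ d i)

/-- Substitution of a multivariate power series `a` (with zero constant coefficient) into a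
one-variable power series `f`, giving `f(a)`. -/
noncomputable def psubst {R : Type*} [CommRing R] {l : ℕ}
    (f : PowerSeries R) (a : MvPowerSeries (Fin l) R) : MvPowerSeries (Fin l) R :=
  fun e => ∑ k ∈ Finset.range ((e.sum fun _ k => k) + 1),
    PowerSeries.coeff k f * MvPowerSeries.coeff e (a ^ k)

open MvPowerSeries (X coeff)

namespace QtAux

open MvPowerSeries (monomial)
open Finsupp (single)

noncomputable def E (a b : ℕ) : Fin 2 →₀ ℕ := single 0 a + single 1 b

@[simp] lemma E_apply_zero (a b : ℕ) : E a b 0 = a := by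
  simp [E, Finsupp.single_apply]

@[simp] lemma E_apply_one (a b : ℕ) : E a b 1 = b := by
  simp [E, Finsupp.single_apply]

lemma eq_E (e : Fin 2 →₀ ℕ) : e = E (e 0) (e 1) := by
  ext j; fin_cases j <;> simp

lemma E_eq_iff {a b a' b' : ℕ} : E a b = E a' b' ↔ a = a' ∧ b = b' := by
  constructor
  · intro h
    have h0 := congrArg (fun f : Fin 2 →₀ ℕ => f 0) h
    have h1 := congrArg (fun f : Fin 2 →₀ ℕ => f 1) h
    simp at h0 h1
    exact ⟨h0, h1⟩
  · rintro ⟨rfl, rfl⟩; rfl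

lemma E_sum (a b : ℕ) : (E a b).sum (fun _ k => k) = a + b := by
  rw [Finsupp.sum_fintype _ _ (fun _ => rfl), Fin.sum_univ_two]; simp

lemma e_sum (e : Fin 2 →₀ ℕ) : (e.sum fun _ k => k) = e 0 + e 1 := by
  rw [Finsupp.sum_fintype _ _ (fun _ => rfl), Fin.sum_univ_two]

lemma single_eq_E (b : ℕ) : (single (1 : Fin 2) b) = E 0 b := by simp [E]

lemma single0_eq_E (a : ℕ) : (single (0 : Fin 2) a) = E a 0 := by simp [E]

variable {R : Type*} [CommRing R]
open scoped Classical

lemma coeff_add_pow (k : ℕ) (e : Fin 2 →₀ ℕ) :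
    coeff e ((X 0 + X 1 : MvPowerSeries (Fin 2) R) ^ k)
      = if e 0 + e 1 = k then (k.choose (e 0) : R) else 0 := by
  rw [add_pow, map_sum]
  have hterm : ∀ j, ((X 0 : MvPowerSeries (Fin 2) R) ^ j * X 1 ^ (k - j) *
      ((k.choose j : ℕ) : MvPowerSeries (Fin 2) R)) = monomial (E j (k - j)) (k.choose j : R) := by
    intro j
    rw [MvPowerSeries.X_pow_eq, MvPowerSeries.X_pow_eq, MvPowerSeries.monomial_mul_monomial,
      one_mul, ← map_natCast (MvPowerSeries.C (σ := Fin 2) (R := R)) (k.choose j),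
      ← MvPowerSeries.monomial_zero_eq_C_apply, MvPowerSeries.monomial_mul_monomial, add_zero,
      one_mul]
    rfl
  simp_rw [hterm, MvPowerSeries.coeff_monomial]
  by_cases h : e 0 + e 1 = k
  · rw [if_pos h, Finset.sum_eq_single (e 0)]
    · rw [if_pos]
      conv_lhs => rw [eq_E e]
      rw [E_eq_iff]
      exact ⟨rfl, by omega⟩
    · intro j hj hne
      rw [if_neg]
      intro hEq
      rw [eq_E e, E_eq_iff] at hEq
      exact hne hEq.1.symm
    · intro h0
      simp only [Finset.mem_range] at h0
      omega
  · rw [if_neg h]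
    apply Finset.sum_eq_zero
    intro j hj
    rw [if_neg]
    intro hEq
    rw [eq_E e, E_eq_iff] at hEq
    simp only [Finset.mem_range] at hj
    omega

lemma Xmul (a b : ℕ) : (X 0 : MvPowerSeries (Fin 2) R) ^ a * X 1 ^ b = monomial (E a b) 1 := by
  rw [MvPowerSeries.X_pow_eq, MvPowerSeries.X_pow_eq, MvPowerSeries.monomial_mul_monomial, one_mul]
  rfl

lemma coeff_prod_lhs (m d0 d1 : ℕ) :
    coeff (E 1 m) ((X 0 * (X 0 + X 1) : MvPowerSeries (Fin 2) R) ^ d0 * X 1 ^ d1)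
      = if d0 = 1 ∧ m = d1 + 1 then 1 else 0 := by
  rcases d0 with _ | _ | d0
  · rw [pow_zero, one_mul, MvPowerSeries.X_pow_eq, MvPowerSeries.coeff_monomial, if_neg, if_neg]
    · simp
    · intro h
      rw [show (Finsupp.single (1 : Fin 2) d1) = E 0 d1 from single_eq_E d1, E_eq_iff] at h
      exact one_ne_zero h.1
  · rw [pow_one, mul_add, add_mul,
      show (X 0 : MvPowerSeries (Fin 2) R) * X 0 * X 1 ^ d1 = X 0 ^ 2 * X 1 ^ d1 by ring,
      show (X 0 : MvPowerSeries (Fin 2) R) * X 1 * X 1 ^ d1 = X 0 ^ 1 * X 1 ^ (d1 + 1) by ring,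
      Xmul, Xmul, map_add, MvPowerSeries.coeff_monomial, MvPowerSeries.coeff_monomial,
      if_neg (by rw [E_eq_iff]; rintro ⟨h, -⟩; omega), zero_add]
    by_cases h : m = d1 + 1
    · rw [if_pos (by rw [E_eq_iff]; exact ⟨rfl, h⟩), if_pos ⟨rfl, h⟩]
    · rw [if_neg (by rw [E_eq_iff]; rintro ⟨-, h'⟩; exact h h'),
        if_neg (by rintro ⟨-, h'⟩; exact h h')]
  · rw [mul_pow, MvPowerSeries.X_pow_eq, mul_assoc, MvPowerSeries.coeff_monomial_mul,
      if_neg, if_neg]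
    · rintro ⟨h, -⟩; omega
    · intro hle
      have := hle 0
      simp [Finsupp.single_apply] at this

lemma msubst_coeff (g : MvPowerSeries (Fin 2) R) (n : ℕ) :
    msubst ![X 0 * (X 0 + X 1), X 1] g (E 1 (n + 1)) = coeff (E 1 n) g := by
  show (∑ d ∈ Fintype.piFinset (fun _ : Fin 2 => Finset.range (((E 1 (n+1)).sum fun _ k => k) + 1)),
    coeff (Finsupp.equivFunOnFinite.symm d) g *
      coeff (E 1 (n+1)) (∏ i, (![X 0 * (X 0 + X 1), X 1] : Fin 2 → MvPowerSeries (Fin 2) R) i ^ d i)) = _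
  rw [Finset.sum_eq_single ![1, n]]
  · rw [show (Finsupp.equivFunOnFinite.symm ![1, n] : Fin 2 →₀ ℕ) = E 1 n by
      ext j; fin_cases j <;> simp]
    rw [Fin.prod_univ_two]
    simp only [Matrix.cons_val_zero, Matrix.cons_val_one, Matrix.head_cons]
    rw [coeff_prod_lhs, if_pos (by simp), mul_one]
  · intro d hd hne
    rw [Fin.prod_univ_two]
    simp only [Matrix.cons_val_zero, Matrix.cons_val_one, Matrix.head_cons]
    rw [coeff_prod_lhs, if_neg, mul_zero]
    rintro ⟨h0, h1⟩
    apply hne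
    funext j
    fin_cases j <;> simp [h0] <;> omega
  · intro h
    exfalso
    apply h
    rw [Fintype.mem_piFinset]
    intro j
    rw [E_sum, Finset.mem_range]
    fin_cases j <;> simp <;> omega

lemma psubst_X0 (Ξ : PowerSeries R) (e : Fin 2 →₀ ℕ) :
    psubst Ξ (X 0 : MvPowerSeries (Fin 2) R) e
      = if e 1 = 0 then PowerSeries.coeff (e 0) Ξ else 0 := by
  show (∑ k ∈ Finset.range ((e.sum fun _ k => k) + 1),
      PowerSeries.coeff k Ξ * coeff e ((X 0 : MvPowerSeries (Fin 2) R) ^ k)) = _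
  simp_rw [MvPowerSeries.coeff_X_pow]
  by_cases h : e 1 = 0
  · rw [if_pos h, Finset.sum_eq_single (e 0)]
    · rw [if_pos (by rw [single0_eq_E]; nth_rewrite 1 [eq_E e]; rw [h]), mul_one]
    · intro k hk hne
      rw [if_neg, mul_zero]
      intro hEq
      rw [single0_eq_E, eq_E e, E_eq_iff] at hEq
      exact hne hEq.1.symm
    · intro habs
      rw [Finset.mem_range, e_sum] at habs
      omega
  · rw [if_neg h]
    apply Finset.sum_eq_zero
    intro k hk
    rw [if_neg, mul_zero]
    intro hEq
    rw [single0_eq_E, eq_E e, E_eq_iff] at hEq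
    exact h hEq.2

lemma psubst_sum_at (Ξ : PowerSeries R) (m : ℕ) :
    psubst Ξ (X 0 + X 1 : MvPowerSeries (Fin 2) R) (single (1 : Fin 2) m)
      = PowerSeries.coeff m Ξ := by
  show (∑ k ∈ Finset.range (((single (1 : Fin 2) m).sum fun _ k => k) + 1),
      PowerSeries.coeff k Ξ * coeff (single (1 : Fin 2) m)
        ((X 0 + X 1 : MvPowerSeries (Fin 2) R) ^ k)) = _
  simp_rw [coeff_add_pow]
  rw [single_eq_E]
  rw [Finset.sum_eq_single m]
  · rw [if_pos (by simp), E_apply_zero, Nat.choose_zero_right, Nat.cast_one, mul_one]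
  · intro k hk hne
    rw [if_neg (by simp; omega), mul_zero]
  · intro habs
    rw [Finset.mem_range, E_sum] at habs
    omega

lemma rhs_coeff (Ξ : PowerSeries R) (h0 : PowerSeries.coeff 0 Ξ = 0) (m : ℕ) :
    (psubst Ξ (X 0) * psubst Ξ (X 0 + X 1) : MvPowerSeries (Fin 2) R) (E 1 m)
      = PowerSeries.coeff 1 Ξ * PowerSeries.coeff m Ξ := by
  have hstep : (psubst Ξ (X 0) * psubst Ξ (X 0 + X 1) : MvPowerSeries (Fin 2) R) (E 1 m)
      = coeff (E 1 m) (psubst Ξ (X 0) * psubst Ξ (X 0 + X 1)) := rfl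
  rw [hstep, MvPowerSeries.coeff_mul]
  rw [Finset.sum_eq_single (single (0 : Fin 2) 1, single (1 : Fin 2) m)]
  · rw [MvPowerSeries.coeff_apply, MvPowerSeries.coeff_apply, psubst_X0, psubst_sum_at]
    rw [if_pos (by simp [Finsupp.single_apply])]
    simp [Finsupp.single_apply]
  · rintro ⟨p, q⟩ hmem hne
    replace hmem := Finset.HasAntidiagonal.mem_antidiagonal.mp hmem
    rw [MvPowerSeries.coeff_apply, psubst_X0]
    by_cases hp1 : p 1 = 0
    · rw [if_pos hp1]
      have hadd0 : p 0 + q 0 = 1 := by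
        have := congrArg (fun f : Fin 2 →₀ ℕ => f 0) hmem
        simpa [Finsupp.add_apply] using this
      rcases Nat.le_one_iff_eq_zero_or_eq_one.mp (by omega : p 0 ≤ 1) with hp0 | hp0
      · have : p 0 = 0 := hp0
        rw [this, h0, zero_mul]
      · exfalso
        apply hne
        have hp : p = single (0 : Fin 2) 1 := by
          ext j; fin_cases j <;> simp [Finsupp.single_apply, hp0, hp1]
        have hq : q = single (1 : Fin 2) m := by
          have hmem' : p + q = single (0 : Fin 2) 1 + single (1 : Fin 2) m := hmem
          rw [hp] at hmem'
          exact add_left_cancel hmem'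
        rw [hp, hq]
    · rw [if_neg hp1, zero_mul]
  · intro habs
    exfalso
    apply habs
    refine Finset.HasAntidiagonal.mem_antidiagonal.mpr ?_
    rfl

end QtAux

open scoped Classical in
/-- In the ring `𝒜[[t]]`, the identity `Q_t(ξ₀) = ξ₀ · Σᵢ ξᵢ t^{2^i - 1}` is forced by the
relation `Q_t(ξ)(x(x+t)) = ξ(x)ξ(x+t)`, by comparing lowest-order coefficients in `x`:
if `g(y)` is a power series in `y` over `R[[t]]` with `g(x(x+t)) = ξ(x)ξ(x+t)` in
`(R[[t]])[[x]]`, then the coefficient of `y` in `g` is `ξ₀·Σᵢ ξᵢ t^{2^i-1}`.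
Here variable `0` is `x` (resp. `y` for `g`) and variable `1` is `t`. -/
theorem Qt_of_xi_zero {R : Type*} [CommRing R] [Algebra (ZMod 2) R]
    (ξ : ℕ → R) (hξ0 : IsUnit (ξ 0))
    (Ξ : PowerSeries R)
    (hΞ : Ξ = PowerSeries.mk fun n => if ∃ i : ℕ, n = 2 ^ i then ξ (Nat.log 2 n) else 0)
    (g : MvPowerSeries (Fin 2) R)
    (hg : msubst ![X 0 * (X 0 + X 1), X 1] g =
      (psubst Ξ (X 0) * psubst Ξ (X 0 + X 1) : MvPowerSeries (Fin 2) R)) :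
    (∀ i : ℕ, coeff (Finsupp.single (0 : Fin 2) 1 + Finsupp.single (1 : Fin 2) (2 ^ i - 1)) g = ξ 0 * ξ i) ∧
    (∀ m : ℕ, (∀ i : ℕ, m ≠ 2 ^ i - 1) →
      coeff (Finsupp.single (0 : Fin 2) 1 + Finsupp.single (1 : Fin 2) m) g = 0) := by
  have c0 : PowerSeries.coeff 0 Ξ = 0 := by
    rw [hΞ, PowerSeries.coeff_mk, if_neg]
    rintro ⟨i, hi⟩
    have : 0 < 2 ^ i := Nat.pow_pos (by norm_num)
    omega
  have c1 : PowerSeries.coeff 1 Ξ = ξ 0 := by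
    rw [hΞ, PowerSeries.coeff_mk, if_pos ⟨0, by norm_num⟩]
    norm_num
  have key : ∀ n : ℕ, coeff (QtAux.E 1 n) g = ξ 0 * PowerSeries.coeff (n + 1) Ξ := by
    intro n
    have h := congrFun hg (QtAux.E 1 (n + 1))
    rw [QtAux.msubst_coeff, QtAux.rhs_coeff Ξ c0] at h
    rw [h, c1]
  constructor
  · intro i
    have h2 : (1 : ℕ) ≤ 2 ^ i := Nat.one_le_two_pow
    have hk := key (2 ^ i - 1)
    rw [Nat.sub_add_cancel h2] at hk
    show coeff (QtAux.E 1 (2 ^ i - 1)) g = _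
    rw [hk, hΞ, PowerSeries.coeff_mk, if_pos ⟨i, rfl⟩, Nat.log_pow one_lt_two]
  · intro m hm
    have hk := key m
    show coeff (QtAux.E 1 m) g = 0
    rw [hk, hΞ, PowerSeries.coeff_mk, if_neg, mul_zero]
    rintro ⟨i, hi⟩
    have h2 : (1 : ℕ) ≤ 2 ^ i := Nat.one_le_two_pow
    exact hm i (by omega)
end

section
/- Over a ℤ/2-algebra R with power series ξ(x) = Σ ξᵢ x^{2^i} (ξ₀ a unit), the product ξ(x)·ξ(x+t) ∈ R[[t]][[x]] can be written as g(x(x+t)) for a unique power series g(y) ∈ R[[t]][[y]]; i.e. ξ(x)ξ(x+t) lies in the subring of power series symmetric under x ↦ x+t. -/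
open MvPowerSeries (X coeff)

open MvPowerSeries (X coeff monomial constantCoeff)

namespace XiAux

variable {R : Type*} [CommRing R]

abbrev S (R : Type*) [CommRing R] := MvPowerSeries (Fin 2) R

/-- degree of an exponent -/
def deg (e : Fin 2 →₀ ℕ) : ℕ := e.sum fun _ k => k

lemma deg_eq (e : Fin 2 →₀ ℕ) : deg e = e 0 + e 1 := by
  rw [deg, Finsupp.sum_fintype _ _ (fun _ => rfl), Fin.sum_univ_two]

lemma deg_add (e₁ e₂ : Fin 2 →₀ ℕ) : deg (e₁ + e₂) = deg e₁ + deg e₂ := by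
  simp [deg_eq]; ring

/-- the exponent (m, n) -/
noncomputable def E (m n : ℕ) : Fin 2 →₀ ℕ := Finsupp.single 0 m + Finsupp.single 1 n

@[simp] lemma E_apply0 (m n : ℕ) : E m n 0 = m := by simp [E]
@[simp] lemma E_apply1 (m n : ℕ) : E m n 1 = n := by simp [E, Finsupp.single_apply]

lemma E_self (e : Fin 2 →₀ ℕ) : E (e 0) (e 1) = e := by
  ext i; fin_cases i <;> simp

@[simp] lemma deg_E (m n : ℕ) : deg (E m n) = m + n := by simp [deg_eq]

lemma E_inj {m n m' n' : ℕ} (h : E m n = E m' n') : m = m' ∧ n = n' := by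
  constructor
  · have := congrArg (fun e : Fin 2 →₀ ℕ => e 0) h; simpa using this
  · have := congrArg (fun e : Fin 2 →₀ ℕ => e 1) h; simpa using this

@[simp] lemma E_zero : E 0 0 = 0 := by ext i; fin_cases i <;> simp

/-- all coefficients in degree < p vanish -/
def DegGe (p : ℕ) (A : S R) : Prop := ∀ e, deg e < p → coeff e A = 0

lemma DegGe.of_constantCoeff {A : S R} (h : constantCoeff A = 0) : DegGe 1 A := by
  intro e he
  have h0 : e 0 = 0 ∧ e 1 = 0 := by
    have := deg_eq e; omega
  have : e = 0 := by rw [← E_self e, h0.1, h0.2, E_zero]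
  rw [this]; exact h

lemma DegGe.mul {A B : S R} {p q : ℕ} (hA : DegGe p A) (hB : DegGe q B) :
    DegGe (p + q) (A * B) := by
  classical
  intro e he
  rw [MvPowerSeries.coeff_mul]
  refine Finset.sum_eq_zero fun x hx => ?_
  rw [Finset.HasAntidiagonal.mem_antidiagonal] at hx
  have hdeg : deg x.1 + deg x.2 = deg e := by rw [← deg_add, hx]
  rcases lt_or_ge (deg x.1) p with h1 | h1
  · rw [hA _ h1, zero_mul]
  · rw [hB _ (by omega), mul_zero]

lemma DegGe.pow {A : S R} (h : constantCoeff A = 0) (n : ℕ) : DegGe n (A ^ n) := by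
  induction n with
  | zero => intro e he; omega
  | succ k ih =>
      rw [pow_succ]
      exact DegGe.mul ih (DegGe.of_constantCoeff h)

lemma coeff_pow_eq_zero {A : S R} (h : constantCoeff A = 0) {n : ℕ}
    {e : Fin 2 →₀ ℕ} (he : deg e < n) : coeff e (A ^ n) = 0 :=
  DegGe.pow h n e he

lemma coeff_pp_eq_zero {a : Fin 2 → S R} (h : ∀ i, constantCoeff (a i) = 0)
    {p q : ℕ} {e : Fin 2 →₀ ℕ} (he : deg e < p + q) :
    coeff e (a 0 ^ p * a 1 ^ q) = 0 :=
  DegGe.mul (DegGe.pow (h 0) p) (DegGe.pow (h 1) q) e he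

/-- box of exponents -/
noncomputable def cbox (N : ℕ) : Finset (Fin 2 →₀ ℕ) := Finset.Iic (E N N)

lemma mem_cbox {N : ℕ} {d : Fin 2 →₀ ℕ} : d ∈ cbox N ↔ d 0 ≤ N ∧ d 1 ≤ N := by
  rw [cbox, Finset.mem_Iic, Finsupp.le_def]
  constructor
  · intro h; exact ⟨by simpa using h 0, by simpa using h 1⟩
  · intro h i; fin_cases i
    · simpa using h.1
    · simpa using h.2

lemma coeff_msubst {a : Fin 2 → S R} (ha : ∀ i, constantCoeff (a i) = 0)
    {e : Fin 2 →₀ ℕ} {N : ℕ} (hN : deg e ≤ N) (f : S R) :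
    coeff e (msubst a f) =
      ∑ d ∈ cbox N, coeff d f * coeff e (a 0 ^ d 0 * a 1 ^ d 1) := by
  classical
  have h1 : coeff e (msubst a f) =
      ∑ d ∈ Fintype.piFinset (fun _ : Fin 2 => Finset.range (deg e + 1)),
        coeff (Finsupp.equivFunOnFinite.symm d) f *
          coeff e (∏ i, a i ^ d i) := rfl
  have h2 : coeff e (msubst a f) =
      ∑ d ∈ cbox (deg e), coeff d f * coeff e (a 0 ^ d 0 * a 1 ^ d 1) := by
    rw [h1]
    refine Finset.sum_nbij' (fun d => (Finsupp.equivFunOnFinite.symm d : Fin 2 →₀ ℕ))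
      (fun d => (d : Fin 2 → ℕ)) ?_ ?_ ?_ ?_ ?_
    · intro d hd
      simp only [Fintype.mem_piFinset, Finset.mem_range] at hd
      rw [mem_cbox]
      constructor
      · have := hd 0; simpa using by omega
      · have := hd 1; simpa using by omega
    · intro d hd
      rw [mem_cbox] at hd
      simp only [Fintype.mem_piFinset, Finset.mem_range]
      intro i; fin_cases i
      · simp; omega
      · simp; omega
    · intro d _; exact Finsupp.equivFunOnFinite.apply_symm_apply d
    · intro d _; exact Finsupp.equivFunOnFinite.symm_apply_apply d
    · intro d _
      congr 1
      rw [Fin.prod_univ_two]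
      simp
  rw [h2]
  refine Finset.sum_subset (fun d hd => by rw [mem_cbox] at hd ⊢; omega) ?_
  intro d hd hd'
  rw [mem_cbox] at hd hd'
  have : deg e < d 0 + d 1 := by omega
  rw [coeff_pp_eq_zero ha this, mul_zero]


lemma coeff_msubst_def (a : Fin 2 → S R) (f : S R) (e : Fin 2 →₀ ℕ) :
    coeff e (msubst a f) =
      ∑ d ∈ Fintype.piFinset (fun _ : Fin 2 => Finset.range ((e.sum fun _ k => k) + 1)),
        coeff (Finsupp.equivFunOnFinite.symm d) f * coeff e (∏ i, a i ^ d i) := rfl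

lemma msubst_add (a : Fin 2 → S R) (f g : S R) :
    msubst a (f + g) = msubst a f + msubst a g := by
  apply MvPowerSeries.ext; intro e
  rw [map_add, coeff_msubst_def, coeff_msubst_def, coeff_msubst_def, ← Finset.sum_add_distrib]
  refine Finset.sum_congr rfl fun d _ => ?_
  rw [map_add, add_mul]

lemma msubst_sub (a : Fin 2 → S R) (f g : S R) :
    msubst a (f - g) = msubst a f - msubst a g := by
  apply MvPowerSeries.ext; intro e
  rw [map_sub, coeff_msubst_def, coeff_msubst_def, coeff_msubst_def, ← Finset.sum_sub_distrib]
  refine Finset.sum_congr rfl fun d _ => ?_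
  rw [map_sub, sub_mul]

lemma msubst_zero (a : Fin 2 → S R) : msubst a 0 = 0 := by
  have := msubst_sub a 0 0
  simpa using this

lemma cbox_zero : cbox (0 : ℕ) = {0} := by
  ext d
  rw [mem_cbox, Finset.mem_singleton]
  constructor
  · intro h
    have h0 : d 0 = 0 := Nat.le_zero.mp h.1
    have h1 : d 1 = 0 := Nat.le_zero.mp h.2
    rw [← E_self d, h0, h1, E_zero]
  · rintro rfl; simp

lemma coeff_msubst' {a : Fin 2 → S R} (ha : ∀ i, constantCoeff (a i) = 0) (f : S R)
    (e : Fin 2 →₀ ℕ) :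
    coeff e (msubst a f) =
      ∑ d ∈ cbox (deg e), coeff d f * coeff e (a 0 ^ d 0 * a 1 ^ d 1) :=
  coeff_msubst ha le_rfl f

lemma constantCoeff_msubst {a : Fin 2 → S R} (ha : ∀ i, constantCoeff (a i) = 0)
    {f : S R} (hf : constantCoeff f = 0) :
    constantCoeff (msubst a f) = 0 := by
  classical
  have h0 : constantCoeff (msubst a f) = coeff 0 (msubst a f) := by
    rw [MvPowerSeries.coeff_zero_eq_constantCoeff]
  rw [h0, coeff_msubst ha (N := 0) (by simp [deg]) f, cbox_zero, Finset.sum_singleton]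
  simp only [Finsupp.coe_zero, Pi.zero_apply, pow_zero, mul_one, one_mul]
  rw [MvPowerSeries.coeff_zero_eq_constantCoeff, hf, zero_mul]

lemma msubst_one {a : Fin 2 → S R} (ha : ∀ i, constantCoeff (a i) = 0) :
    msubst a 1 = 1 := by
  classical
  apply MvPowerSeries.ext; intro e
  rw [coeff_msubst' ha]
  rw [Finset.sum_eq_single 0]
  · simp [MvPowerSeries.coeff_one]
  · intro d _ hd
    rw [MvPowerSeries.coeff_one, if_neg hd, zero_mul]
  · intro h
    exact absurd (by rw [mem_cbox]; simp) h

lemma msubst_X {a : Fin 2 → S R} (ha : ∀ i, constantCoeff (a i) = 0) (i : Fin 2) :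
    msubst a (X i) = a i := by
  classical
  apply MvPowerSeries.ext; intro e
  rw [coeff_msubst' ha]
  rcases Nat.eq_zero_or_pos (deg e) with h | h
  · have he : e = 0 := by
      rw [deg_eq] at h
      have h0 : e 0 = 0 := by omega
      have h1 : e 1 = 0 := by omega
      rw [← E_self e, h0, h1, E_zero]
    subst he
    rw [h, cbox_zero, Finset.sum_singleton]
    have hx : coeff (0 : Fin 2 →₀ ℕ) (X i : S R) = 0 := by
      rw [MvPowerSeries.coeff_zero_eq_constantCoeff, MvPowerSeries.constantCoeff_X]
    rw [hx, zero_mul, MvPowerSeries.coeff_zero_eq_constantCoeff, ha i]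
  · rw [Finset.sum_eq_single (Finsupp.single i 1)]
    · rw [MvPowerSeries.coeff_X, if_pos rfl, one_mul]
      congr 1
      fin_cases i <;> simp
    · intro d _ hd
      rw [MvPowerSeries.coeff_X, if_neg hd, zero_mul]
    · intro hm
      exfalso; apply hm
      rw [mem_cbox]
      fin_cases i <;> simp [Finsupp.single_apply] <;> omega

lemma sum_sigma_antidiagonal (M : ℕ) (T : (Fin 2 →₀ ℕ) → (Fin 2 →₀ ℕ) → R)
    (hT : ∀ p1 p2, p1 + p2 ∉ cbox M → T p1 p2 = 0) :
    (∑ d ∈ cbox M, ∑ p ∈ Finset.HasAntidiagonal.antidiagonal d, T p.1 p.2)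
      = ∑ d1 ∈ cbox M, ∑ d2 ∈ cbox M, T d1 d2 := by
  classical
  rw [Finset.sum_sigma', ← Finset.sum_product']
  have step1 : (∑ x ∈ (cbox M).sigma Finset.HasAntidiagonal.antidiagonal, T x.2.1 x.2.2)
      = ∑ p ∈ (cbox M ×ˢ cbox M).filter (fun p => p.1 + p.2 ∈ cbox M), T p.1 p.2 := by
    refine Finset.sum_nbij' (fun x => (x.2.1, x.2.2)) (fun p => ⟨p.1 + p.2, (p.1, p.2)⟩)
      ?_ ?_ ?_ ?_ ?_
    · rintro ⟨d, p1, p2⟩ hx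
      simp only [Finset.mem_sigma, Finset.HasAntidiagonal.mem_antidiagonal] at hx
      obtain ⟨hd, h2⟩ := hx
      dsimp only
      rw [Finset.mem_filter, Finset.mem_product]
      rw [mem_cbox] at hd
      have e0 : p1 0 + p2 0 = d 0 := by rw [← h2]; simp
      have e1 : p1 1 + p2 1 = d 1 := by rw [← h2]; simp
      refine ⟨⟨?_, ?_⟩, ?_⟩
      · simp only [Prod.fst]; rw [mem_cbox]; omega
      · simp only [Prod.snd]; rw [mem_cbox]; omega
      · simp only [Prod.fst, Prod.snd]; rw [h2, mem_cbox]; omega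
    · intro p hp
      rw [Finset.mem_filter] at hp
      simp only [Finset.mem_sigma, Finset.HasAntidiagonal.mem_antidiagonal]
      exact ⟨hp.2, by simp⟩
    · rintro ⟨d, p1, p2⟩ hx
      simp only [Finset.mem_sigma, Finset.HasAntidiagonal.mem_antidiagonal] at hx
      obtain ⟨-, h2⟩ := hx
      subst h2; rfl
    · intro p _; rfl
    · intro x _; rfl
  rw [step1]
  refine Finset.sum_subset (Finset.filter_subset _ _) ?_
  intro p hp hp'
  rw [Finset.mem_filter] at hp'
  exact hT p.1 p.2 fun hmem => hp' ⟨hp, hmem⟩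

lemma msubst_mul {a : Fin 2 → S R} (ha : ∀ i, constantCoeff (a i) = 0) (f g : S R) :
    msubst a (f * g) = msubst a f * msubst a g := by
  classical
  apply MvPowerSeries.ext; intro e
  set N := deg e with hNdef
  have hR : coeff e (msubst a f * msubst a g) =
      ∑ d1 ∈ cbox (2*N), ∑ d2 ∈ cbox (2*N),
        coeff d1 f * coeff d2 g * coeff e (a 0 ^ (d1 0 + d2 0) * a 1 ^ (d1 1 + d2 1)) := by
    rw [MvPowerSeries.coeff_mul]
    have step : ∀ p ∈ Finset.HasAntidiagonal.antidiagonal e,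
        coeff p.1 (msubst a f) * coeff p.2 (msubst a g) =
        ∑ d1 ∈ cbox (2*N), ∑ d2 ∈ cbox (2*N),
          coeff d1 f * coeff d2 g *
            (coeff p.1 (a 0 ^ d1 0 * a 1 ^ d1 1) * coeff p.2 (a 0 ^ d2 0 * a 1 ^ d2 1)) := by
      intro p hp
      rw [Finset.HasAntidiagonal.mem_antidiagonal] at hp
      have hdd := deg_add p.1 p.2
      rw [hp] at hdd
      have h1 : deg p.1 ≤ 2*N := by omega
      have h2 : deg p.2 ≤ 2*N := by omega
      rw [coeff_msubst ha h1 f, coeff_msubst ha h2 g, Finset.sum_mul_sum]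
      refine Finset.sum_congr rfl fun d1 _ => Finset.sum_congr rfl fun d2 _ => by ring
    rw [Finset.sum_congr rfl step, Finset.sum_comm]
    refine Finset.sum_congr rfl fun d1 _ => ?_
    rw [Finset.sum_comm]
    refine Finset.sum_congr rfl fun d2 _ => ?_
    rw [← Finset.mul_sum, ← MvPowerSeries.coeff_mul]
    congr 1
    ring
  rw [hR, coeff_msubst ha (N := 2*N) (by omega) (f*g)]
  have hL : ∀ d ∈ cbox (2*N),
      coeff d (f * g) * coeff e (a 0 ^ d 0 * a 1 ^ d 1) =
      ∑ p ∈ Finset.HasAntidiagonal.antidiagonal d,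
        coeff p.1 f * coeff p.2 g *
          coeff e (a 0 ^ (p.1 0 + p.2 0) * a 1 ^ (p.1 1 + p.2 1)) := by
    intro d hd
    rw [MvPowerSeries.coeff_mul, Finset.sum_mul]
    refine Finset.sum_congr rfl fun p hp => ?_
    rw [Finset.HasAntidiagonal.mem_antidiagonal] at hp
    have h0 : p.1 0 + p.2 0 = d 0 := by rw [← hp]; simp
    have h1 : p.1 1 + p.2 1 = d 1 := by rw [← hp]; simp
    rw [h0, h1]
  rw [Finset.sum_congr rfl hL]
  refine sum_sigma_antidiagonal (2*N) (fun p1 p2 => coeff p1 f * coeff p2 g *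
      coeff e (a 0 ^ (p1 0 + p2 0) * a 1 ^ (p1 1 + p2 1))) ?_
  intro p1 p2 hmem
  rw [mem_cbox] at hmem
  simp only [Finsupp.add_apply] at hmem
  have hlt : deg e < (p1 0 + p2 0) + (p1 1 + p2 1) := by omega
  rw [coeff_pp_eq_zero ha hlt, mul_zero]

lemma msubst_pow {a : Fin 2 → S R} (ha : ∀ i, constantCoeff (a i) = 0) (f : S R)
    (n : ℕ) : msubst a (f ^ n) = msubst a f ^ n := by
  induction n with
  | zero => simpa using msubst_one ha
  | succ k ih => rw [pow_succ, pow_succ, msubst_mul ha, ih]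


lemma deg_le_of_mem_cbox {d : Fin 2 →₀ ℕ} {N : ℕ} (hd : d ∈ cbox N) : deg d ≤ 2*N := by
  rw [mem_cbox] at hd
  rw [deg_eq]; omega

lemma msubst_msubst {a b : Fin 2 → S R}
    (ha : ∀ i, constantCoeff (a i) = 0)
    (hb : ∀ i, constantCoeff (b i) = 0) (g : S R) :
    msubst b (msubst a g) = msubst (fun i => msubst b (a i)) g := by
  classical
  have hba : ∀ i, constantCoeff (msubst b (a i)) = 0 :=
    fun i => constantCoeff_msubst hb (ha i)
  apply MvPowerSeries.ext; intro e
  set N := deg e with hNdef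
  rw [coeff_msubst' hb]
  have step : ∀ d ∈ cbox N,
      (∑ d' ∈ cbox (2*N), coeff d' g * coeff d (a 0 ^ d' 0 * a 1 ^ d' 1)) *
        coeff e (b 0 ^ d 0 * b 1 ^ d 1)
      = ∑ d' ∈ cbox (2*N), coeff d' g *
          (coeff d (a 0 ^ d' 0 * a 1 ^ d' 1) * coeff e (b 0 ^ d 0 * b 1 ^ d 1)) := by
    intro d _
    rw [Finset.sum_mul]
    exact Finset.sum_congr rfl fun d' _ => by ring
  calc ∑ d ∈ cbox N, coeff d (msubst a g) * coeff e (b 0 ^ d 0 * b 1 ^ d 1)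
      = ∑ d ∈ cbox N, (∑ d' ∈ cbox (2*N), coeff d' g *
          coeff d (a 0 ^ d' 0 * a 1 ^ d' 1)) * coeff e (b 0 ^ d 0 * b 1 ^ d 1) := by
        refine Finset.sum_congr rfl fun d hd => ?_
        rw [coeff_msubst ha (deg_le_of_mem_cbox hd) g]
    _ = ∑ d' ∈ cbox (2*N), coeff d' g *
          ∑ d ∈ cbox N, coeff d (a 0 ^ d' 0 * a 1 ^ d' 1) *
            coeff e (b 0 ^ d 0 * b 1 ^ d 1) := by
        rw [Finset.sum_congr rfl step, Finset.sum_comm]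
        exact Finset.sum_congr rfl fun d' _ => by rw [Finset.mul_sum]
    _ = ∑ d' ∈ cbox (2*N), coeff d' g *
          coeff e ((msubst b (a 0)) ^ d' 0 * (msubst b (a 1)) ^ d' 1) := by
        refine Finset.sum_congr rfl fun d' _ => ?_
        congr 1
        rw [← coeff_msubst' hb (a 0 ^ d' 0 * a 1 ^ d' 1) e]
        rw [msubst_mul hb, msubst_pow hb, msubst_pow hb]
    _ = coeff e (msubst (fun i => msubst b (a i)) g) := by
        rw [coeff_msubst hba (N := 2*N) (by omega) g]


lemma two_S (h2 : (2 : R) = 0) : (2 : S R) = 0 := by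
  have : (2 : S R) = (MvPowerSeries.C (σ := Fin 2) (R := R)) (2 : R) := by
    rw [← map_ofNat ((MvPowerSeries.C (σ := Fin 2) (R := R))) 2]
  rw [this, h2, map_zero]

lemma frob_sq (h2 : (2 : R) = 0) (A B : S R) : (A + B) ^ 2 = A ^ 2 + B ^ 2 := by
  have h2S := two_S h2
  have : (A + B) ^ 2 = A ^ 2 + 2 * A * B + B ^ 2 := by ring
  rw [this, h2S]
  ring

lemma frob (h2 : (2 : R) = 0) (A B : S R) (i : ℕ) :
    (A + B) ^ 2 ^ i = A ^ 2 ^ i + B ^ 2 ^ i := by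
  induction i with
  | zero => simp
  | succ k ih =>
      have hp : (2 : ℕ) ^ (k + 1) = 2 ^ k * 2 := by ring
      rw [hp, pow_mul, pow_mul, pow_mul, ih, frob_sq h2]

/-- `Σ_i ξ i * A ^ 2 ^ i` -/
noncomputable def XiS (ξ : ℕ → R) (A : S R) : S R :=
  fun e => ∑ i ∈ Finset.range (deg e + 1), ξ i * coeff e (A ^ 2 ^ i)

lemma coeff_XiS_def (ξ : ℕ → R) (A : S R) (e : Fin 2 →₀ ℕ) :
    coeff e (XiS ξ A) = ∑ i ∈ Finset.range (deg e + 1), ξ i * coeff e (A ^ 2 ^ i) := rfl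

lemma coeff_XiS (ξ : ℕ → R) {A : S R} (hA : constantCoeff A = 0)
    {e : Fin 2 →₀ ℕ} {K : ℕ} (hK : deg e ≤ K) :
    coeff e (XiS ξ A) = ∑ i ∈ Finset.range (K + 1), ξ i * coeff e (A ^ 2 ^ i) := by
  rw [coeff_XiS_def]
  refine Finset.sum_subset (by simp; omega) ?_
  intro i hi hi'
  simp only [Finset.mem_range] at hi hi'
  have : deg e < 2 ^ i := by
    have := Nat.lt_two_pow_self (n := i)
    omega
  rw [coeff_pow_eq_zero hA this, mul_zero]

lemma XiS_add (h2 : (2 : R) = 0) (ξ : ℕ → R) (A B : S R) :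
    XiS ξ (A + B) = XiS ξ A + XiS ξ B := by
  apply MvPowerSeries.ext; intro e
  rw [map_add, coeff_XiS_def, coeff_XiS_def, coeff_XiS_def, ← Finset.sum_add_distrib]
  refine Finset.sum_congr rfl fun i _ => ?_
  rw [frob h2, map_add, mul_add]

lemma XiS_msubst {a : Fin 2 → S R} (ha : ∀ i, constantCoeff (a i) = 0)
    (ξ : ℕ → R) {A : S R} (hA : constantCoeff A = 0) :
    msubst a (XiS ξ A) = XiS ξ (msubst a A) := by
  classical
  have hmA : constantCoeff (msubst a A) = 0 := constantCoeff_msubst ha hA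
  apply MvPowerSeries.ext; intro e
  set N := deg e with hNdef
  rw [coeff_msubst' ha]
  calc ∑ d ∈ cbox N, coeff d (XiS ξ A) * coeff e (a 0 ^ d 0 * a 1 ^ d 1)
      = ∑ d ∈ cbox N, ∑ i ∈ Finset.range (2*N + 1),
          ξ i * coeff d (A ^ 2 ^ i) * coeff e (a 0 ^ d 0 * a 1 ^ d 1) := by
        refine Finset.sum_congr rfl fun d hd => ?_
        rw [coeff_XiS ξ hA (deg_le_of_mem_cbox hd), Finset.sum_mul]
    _ = ∑ i ∈ Finset.range (2*N + 1),
          ξ i * ∑ d ∈ cbox N, coeff d (A ^ 2 ^ i) * coeff e (a 0 ^ d 0 * a 1 ^ d 1) := by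
        rw [Finset.sum_comm]
        refine Finset.sum_congr rfl fun i _ => ?_
        rw [Finset.mul_sum]
        exact Finset.sum_congr rfl fun d _ => by ring
    _ = ∑ i ∈ Finset.range (2*N + 1), ξ i * coeff e ((msubst a A) ^ 2 ^ i) := by
        refine Finset.sum_congr rfl fun i _ => ?_
        rw [← coeff_msubst' ha (A ^ 2 ^ i) e, msubst_pow ha]
    _ = coeff e (XiS ξ (msubst a A)) := by
        rw [coeff_XiS ξ hmA (K := 2*N) (by omega)]

open scoped Classical in
lemma psubst_eq_XiS (ξ : ℕ → R) {A : S R} (hA : constantCoeff A = 0) :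
    psubst (PowerSeries.mk fun n => if ∃ i : ℕ, n = 2 ^ i then ξ (Nat.log 2 n) else 0) A
      = XiS ξ A := by
  apply MvPowerSeries.ext; intro e
  set N := deg e with hNdef
  have h1 : coeff e (psubst (PowerSeries.mk fun n =>
        if ∃ i : ℕ, n = 2 ^ i then ξ (Nat.log 2 n) else 0) A)
      = ∑ k ∈ Finset.range (N + 1),
          (if ∃ i : ℕ, k = 2 ^ i then ξ (Nat.log 2 k) else 0) * coeff e (A ^ k) := by
    have h0 : coeff e (psubst (PowerSeries.mk fun n =>
          if ∃ i : ℕ, n = 2 ^ i then ξ (Nat.log 2 n) else 0) A)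
        = ∑ k ∈ Finset.range ((e.sum fun _ k => k) + 1),
            PowerSeries.coeff k (PowerSeries.mk fun n =>
              if ∃ i : ℕ, n = 2 ^ i then ξ (Nat.log 2 n) else 0) * coeff e (A ^ k) := rfl
    rw [h0]
    exact Finset.sum_congr rfl fun k _ => by rw [PowerSeries.coeff_mk]
  rw [h1, coeff_XiS_def]
  have h2 : ∑ k ∈ Finset.range (N + 1),
        (if ∃ i : ℕ, k = 2 ^ i then ξ (Nat.log 2 k) else 0) * coeff e (A ^ k)
      = ∑ k ∈ (Finset.range (N + 1)).filter (fun k => ∃ i : ℕ, k = 2 ^ i),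
          ξ (Nat.log 2 k) * coeff e (A ^ k) := by
    rw [Finset.sum_filter]
    exact Finset.sum_congr rfl fun k _ => by rw [ite_mul, zero_mul]
  have h3 : ∑ i ∈ Finset.range (N + 1), ξ i * coeff e (A ^ 2 ^ i)
      = ∑ i ∈ (Finset.range (N + 1)).filter (fun i => 2 ^ i ≤ N),
          ξ i * coeff e (A ^ 2 ^ i) := by
    refine (Finset.sum_subset (Finset.filter_subset _ _) ?_).symm
    intro i hi hi'
    simp only [Finset.mem_filter, Finset.mem_range] at hi hi'
    have : deg e < 2 ^ i := by omega
    rw [coeff_pow_eq_zero hA this, mul_zero]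
  rw [h2, h3]
  refine Finset.sum_nbij' (fun k => Nat.log 2 k) (fun i => 2 ^ i) ?_ ?_ ?_ ?_ ?_
  · intro k hk
    simp only [Finset.mem_filter, Finset.mem_range] at hk ⊢
    obtain ⟨hk1, i, rfl⟩ := hk
    rw [Nat.log_pow (by norm_num)]
    have := Nat.lt_two_pow_self (n := i)
    omega
  · intro i hi
    simp only [Finset.mem_filter, Finset.mem_range] at hi ⊢
    exact ⟨by omega, i, rfl⟩
  · intro k hk
    simp only [Finset.mem_filter, Finset.mem_range] at hk
    obtain ⟨-, i, rfl⟩ := hk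
    rw [Nat.log_pow (by norm_num)]
  · intro i _
    rw [Nat.log_pow (by norm_num)]
  · intro k hk
    simp only [Finset.mem_filter, Finset.mem_range] at hk
    obtain ⟨-, i, rfl⟩ := hk
    rw [Nat.log_pow (by norm_num)]


/-- the substitution x ↦ x+t, t ↦ t -/
noncomputable def mvσ (R : Type*) [CommRing R] : Fin 2 → S R := ![X 0 + X 1, X 1]
/-- the substitution y ↦ x(x+t), t ↦ t -/
noncomputable def mvu (R : Type*) [CommRing R] : Fin 2 → S R := ![X 0 * (X 0 + X 1), X 1]

lemma const_mvσ : ∀ i, constantCoeff (mvσ R i) = 0 := by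
  intro i
  fin_cases i <;> simp [mvσ]

lemma const_mvu : ∀ i, constantCoeff (mvu R i) = 0 := by
  intro i
  fin_cases i <;> simp [mvu]

lemma X_add_X (h2 : (2 : R) = 0) : (X 0 + X 1 : S R) + X 1 = X 0 := by
  have : (X 0 + X 1 : S R) + X 1 = X 0 + 2 * X 1 := by ring
  rw [this, two_S h2, zero_mul, add_zero]

lemma mσ_zero : msubst (mvσ R) (X 0) = X 0 + X 1 := by
  rw [msubst_X const_mvσ]
  simp [mvσ]

lemma mσ_one : msubst (mvσ R) (X 1) = X 1 := by
  rw [msubst_X const_mvσ]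
  simp [mvσ]

lemma mσ_X01 (h2 : (2 : R) = 0) : msubst (mvσ R) (X 0 + X 1) = X 0 := by
  rw [msubst_add, mσ_zero, mσ_one, X_add_X h2]

lemma mσ_fix_msubst_mvu (h2 : (2 : R) = 0) (g : S R) :
    msubst (mvσ R) (msubst (mvu R) g) = msubst (mvu R) g := by
  have h0 : msubst (mvσ R) (mvu R 0) = mvu R 0 := by
    simp only [mvu, Matrix.cons_val_zero]
    rw [msubst_mul const_mvσ, msubst_add, mσ_zero, mσ_one, X_add_X h2]
    ring
  have h1 : msubst (mvσ R) (mvu R 1) = mvu R 1 := by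
    simp only [mvu, Matrix.cons_val_one, Matrix.head_cons]
    exact mσ_one
  rw [msubst_msubst const_mvu const_mvσ]
  have harg : (fun i => msubst (mvσ R) (mvu R i)) = mvu R := by
    funext i
    fin_cases i
    · exact h0
    · exact h1
  rw [harg]

lemma part1 (h2 : (2 : R) = 0) (ξ : ℕ → R) :
    msubst (mvσ R) (XiS ξ (X 0) * XiS ξ (X 0 + X 1)) = XiS ξ (X 0) * XiS ξ (X 0 + X 1) := by
  have hc0 : constantCoeff (X 0 : S R) = 0 := by simp
  have hc01 : constantCoeff (X 0 + X 1 : S R) = 0 := by simp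
  rw [msubst_mul const_mvσ, XiS_msubst const_mvσ ξ hc0, XiS_msubst const_mvσ ξ hc01,
    mσ_zero, mσ_X01 h2]
  ring


lemma upow_eq (p q : ℕ) :
    ((X 0 * (X 0 + X 1) : S R)) ^ p * (X 1 : S R) ^ q =
      ∑ c ∈ Finset.range (p + 1),
        MvPowerSeries.monomial (E (p + c) (p - c + q)) ((p.choose c : R)) := by
  rw [mul_pow, add_pow, Finset.mul_sum, Finset.sum_mul]
  refine Finset.sum_congr rfl fun c hc => ?_
  rw [Finset.mem_range] at hc
  have h1 : (X 0 : S R) ^ p * ((X 0 : S R) ^ c * (X 1 : S R) ^ (p - c) * (p.choose c : S R))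
        * (X 1 : S R) ^ q
      = ((X 0 : S R) ^ (p + c) * (X 1 : S R) ^ (p - c + q)) * (p.choose c : S R) := by
    rw [pow_add, pow_add]; ring
  rw [h1, MvPowerSeries.X_pow_eq, MvPowerSeries.X_pow_eq, MvPowerSeries.monomial_mul_monomial]
  have h2 : (p.choose c : S R) = (MvPowerSeries.C (σ := Fin 2) (R := R)) (p.choose c : R) := by
    rw [map_natCast]
  rw [h2, ← MvPowerSeries.monomial_zero_eq_C_apply, MvPowerSeries.monomial_mul_monomial]
  rw [add_zero]
  simp only [one_mul]
  congr 1

lemma coeff_upow (m n p q : ℕ) :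
    coeff (E m n) (((X 0 * (X 0 + X 1) : S R)) ^ p * (X 1 : S R) ^ q) =
      ∑ c ∈ Finset.range (p + 1),
        (if p + c = m ∧ p - c + q = n then (p.choose c : R) else 0) := by
  classical
  rw [upow_eq, map_sum]
  refine Finset.sum_congr rfl fun c _ => ?_
  rw [MvPowerSeries.coeff_monomial]
  by_cases h : p + c = m ∧ p - c + q = n
  · rw [if_pos (by rw [h.1, h.2]), if_pos h]
  · rw [if_neg (fun hE => h ⟨(E_inj hE).1.symm, (E_inj hE).2.symm⟩), if_neg h]

/-- structure-formula term -/
noncomputable def SFt (g : S R) (m n p : ℕ) : R :=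
  if m ≤ 2*p ∧ 2*p - m ≤ n then coeff (E p (n - (2*p - m))) g * (p.choose (m - p) : R)
  else 0

lemma SF (g : S R) (m n : ℕ) :
    coeff (E m n) (msubst (mvu R) g) = ∑ p ∈ Finset.range (m + 1), SFt g m n p := by
  classical
  set N := m + n with hN
  have hdeg : deg (E m n) ≤ N := by simp [hN]
  rw [coeff_msubst const_mvu hdeg g]
  have hmv0 : mvu R 0 = X 0 * (X 0 + X 1) := rfl
  have hmv1 : mvu R 1 = X 1 := rfl
  -- reindex to double sum over (p, q)
  have step1 : (∑ d ∈ cbox N, coeff d g *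
        coeff (E m n) ((mvu R 0) ^ d 0 * (mvu R 1) ^ d 1))
      = ∑ p ∈ Finset.range (N+1), ∑ q ∈ Finset.range (N+1), coeff (E p q) g *
        coeff (E m n) (((X 0 * (X 0 + X 1) : S R)) ^ p * (X 1 : S R) ^ q) := by
    rw [← Finset.sum_product']
    refine Finset.sum_nbij' (fun d => (d 0, d 1)) (fun pq => E pq.1 pq.2) ?_ ?_ ?_ ?_ ?_
    · intro d hd
      rw [mem_cbox] at hd
      simp only [Finset.mem_product, Finset.mem_range]
      omega
    · intro pq hpq
      simp only [Finset.mem_product, Finset.mem_range] at hpq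
      rw [mem_cbox]
      simp only [E_apply0, E_apply1]
      omega
    · intro d _; exact E_self d
    · intro pq _; simp
    · intro d _
      rw [hmv0, hmv1, E_self d]
  rw [step1]
  -- compute inner sums
  have step2 : ∀ p, (∑ q ∈ Finset.range (N+1), coeff (E p q) g *
        coeff (E m n) (((X 0 * (X 0 + X 1) : S R)) ^ p * (X 1 : S R) ^ q))
      = if p + (m - p) = m ∧ p - (m - p) ≤ n then
          coeff (E p (n - (p - (m - p)))) g * (p.choose (m - p) : R) else 0 := by
    intro p
    have inner : ∀ q, coeff (E p q) g *
          coeff (E m n) (((X 0 * (X 0 + X 1) : S R)) ^ p * (X 1 : S R) ^ q)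
        = ∑ c ∈ Finset.range (p+1),
            (if p + c = m ∧ p - c + q = n then coeff (E p q) g * (p.choose c : R) else 0) := by
      intro q
      rw [coeff_upow, Finset.mul_sum]
      exact Finset.sum_congr rfl fun c _ => by rw [mul_ite, mul_zero]
    rw [Finset.sum_congr rfl fun q _ => inner q, Finset.sum_comm]
    have innerq : ∀ c, (∑ q ∈ Finset.range (N+1),
          (if p + c = m ∧ p - c + q = n then coeff (E p q) g * (p.choose c : R) else 0))
        = if p + c = m ∧ p - c ≤ n then
            coeff (E p (n - (p - c))) g * (p.choose c : R) else 0 := by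
      intro c
      rw [Finset.sum_eq_single (n - (p - c))]
      · by_cases hcond : p + c = m ∧ p - c ≤ n
        · rw [if_pos ⟨hcond.1, by omega⟩, if_pos hcond]
        · rw [if_neg (by omega), if_neg hcond]
      · intro q _ hq
        rw [if_neg (by omega)]
      · intro hmem
        exfalso; apply hmem
        rw [Finset.mem_range]; omega
    rw [Finset.sum_congr rfl fun c _ => innerq c]
    rw [Finset.sum_eq_single (m - p)]
    · intro c _ hc
      rw [if_neg (by omega)]
    · intro hmem
      rw [Finset.mem_range] at hmem
      have hgt : p < m - p := by omega
      by_cases hcond : p + (m - p) = m ∧ p - (m - p) ≤ n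
      · rw [if_pos hcond, Nat.choose_eq_zero_of_lt hgt, Nat.cast_zero, mul_zero]
      · rw [if_neg hcond]
  rw [Finset.sum_congr rfl fun p _ => step2 p]
  -- shrink range and identify with SFt
  rw [← Finset.sum_subset (Finset.range_subset_range.mpr (by omega) :
      Finset.range (m+1) ⊆ Finset.range (N+1)) ?_]
  · refine Finset.sum_congr rfl fun p hp => ?_
    rw [Finset.mem_range] at hp
    rw [SFt]
    by_cases h1 : m ≤ 2*p
    · have e1 : p + (m - p) = m := by omega
      have e2 : p - (m - p) = 2*p - m := by omega
      rw [e1, e2]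
      by_cases h2 : 2*p - m ≤ n
      · rw [if_pos ⟨rfl, h2⟩, if_pos ⟨h1, h2⟩]
      · rw [if_neg (by omega), if_neg (by omega)]
    · -- 2p < m : both sides vanish (choose = 0 on left)
      rw [if_neg (show ¬(m ≤ 2*p ∧ 2*p - m ≤ n) by omega)]
      by_cases hc : p + (m - p) = m ∧ p - (m - p) ≤ n
      · rw [if_pos hc, Nat.choose_eq_zero_of_lt (by omega), Nat.cast_zero, mul_zero]
      · rw [if_neg hc]
  · intro p hp hp'
    rw [Finset.mem_range] at hp hp'
    rw [if_neg (by omega)]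


lemma coeff_X0_mul (w : S R) (m n : ℕ) :
    coeff (E m n) (X 0 * w) = if 1 ≤ m then coeff (E (m-1) n) w else 0 := by
  classical
  have hX : (X 0 : S R) = MvPowerSeries.monomial (Finsupp.single 0 1) 1 := by
    rw [← pow_one (X 0 : S R), MvPowerSeries.X_pow_eq]
  rw [hX, MvPowerSeries.coeff_monomial_mul]
  by_cases hm : 1 ≤ m
  · have hE : E m n - Finsupp.single 0 1 = E (m-1) n := by
      ext i
      fin_cases i
      · rw [Finsupp.tsub_apply]; simp [Finsupp.single_apply]
      · rw [Finsupp.tsub_apply]; simp [Finsupp.single_apply]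
    rw [if_pos, if_pos hm, one_mul, hE]
    rw [Finsupp.single_le_iff]
    simpa using hm
  · rw [if_neg, if_neg hm]
    rw [Finsupp.single_le_iff]
    simpa using hm

lemma X1_mul_inj {w : S R} (h : (X 1 : S R) * w = 0) : w = 0 := by
  apply MvPowerSeries.ext; intro e
  have hX : (X 1 : S R) = MvPowerSeries.monomial (Finsupp.single 1 1) 1 := by
    rw [← pow_one (X 1 : S R), MvPowerSeries.X_pow_eq]
  have := congrArg (coeff (e + Finsupp.single 1 1)) h
  rw [hX, MvPowerSeries.coeff_monomial_mul, if_pos le_add_self, one_mul,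
    add_tsub_cancel_right, map_zero] at this
  simpa using this

lemma choose_self_term (g : S R) (p n : ℕ) : SFt g (2*p) n p = coeff (E p n) g := by
  rw [SFt, if_pos ⟨le_rfl, by omega⟩]
  have h1 : 2*p - 2*p = 0 := by omega
  have h2 : 2*p - p = p := by omega
  rw [h1, h2, Nat.sub_zero, Nat.choose_self, Nat.cast_one, mul_one]

lemma msubst_mvu_inj {g : S R} (h : msubst (mvu R) g = 0) : g = 0 := by
  classical
  have key : ∀ n, ∀ p, coeff (E p n) g = 0 := by
    intro n
    induction n using Nat.strong_induction_on with
    | _ n ih =>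
      intro p
      have h0 : coeff (E (2*p) n) (msubst (mvu R) g) = 0 := by rw [h, map_zero]
      rw [SF g (2*p) n] at h0
      rw [Finset.sum_eq_single p] at h0
      · rw [choose_self_term] at h0
        exact h0
      · intro p' _ hp'
        rw [SFt]
        by_cases hc : 2*p ≤ 2*p' ∧ 2*p' - 2*p ≤ n
        · rw [if_pos hc]
          have hlt : n - (2*p' - 2*p) < n := by omega
          rw [ih _ hlt, zero_mul]
        · rw [if_neg hc]
      · intro hmem
        exfalso; apply hmem
        rw [Finset.mem_range]; omega
  apply MvPowerSeries.ext; intro e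
  rw [map_zero, ← E_self e]
  exact key (e 1) (e 0)


/-- recursive solution of the triangular system -/
noncomputable def sol (F : ℕ → ℕ → R) : ℕ → (ℕ → R) × (ℕ → R)
  | n =>
    ( fun a =>
        F (2*a) n
          - (∑ p ∈ Finset.range (2*a+1), if h : a < p ∧ 2*p - 2*a ≤ n then
              ((sol F (n - (2*p - 2*a))).1 p) * (p.choose (2*a - p) : R) else 0)
          - (∑ p ∈ Finset.range (2*a), if h : 0 < a ∧ 2*a - 1 ≤ 2*p ∧ 2*p - (2*a-1) ≤ n then
              ((sol F (n - (2*p - (2*a-1)))).2 p) * (p.choose ((2*a-1) - p) : R) else 0),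
      fun a =>
        F (2*a+1) n
          - (∑ p ∈ Finset.range (2*a+2), if h : 2*a+1 ≤ 2*p ∧ 2*p - (2*a+1) ≤ n then
              ((sol F (n - (2*p - (2*a+1)))).1 p) * (p.choose ((2*a+1) - p) : R) else 0)
          - (∑ p ∈ Finset.range (2*a+1), if h : a < p ∧ 2*p - 2*a ≤ n then
              ((sol F (n - (2*p - 2*a))).2 p) * (p.choose (2*a - p) : R) else 0) )
termination_by n => n
decreasing_by all_goals omega

lemma sol_fst (F : ℕ → ℕ → R) (n a : ℕ) :
    (sol F n).1 a = F (2*a) n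
      - (∑ p ∈ Finset.range (2*a+1), if a < p ∧ 2*p - 2*a ≤ n then
          ((sol F (n - (2*p - 2*a))).1 p) * (p.choose (2*a - p) : R) else 0)
      - (∑ p ∈ Finset.range (2*a), if 0 < a ∧ 2*a - 1 ≤ 2*p ∧ 2*p - (2*a-1) ≤ n then
          ((sol F (n - (2*p - (2*a-1)))).2 p) * (p.choose ((2*a-1) - p) : R) else 0) := by
  rw [sol]
  simp only [dite_eq_ite]

lemma sol_snd (F : ℕ → ℕ → R) (n a : ℕ) :
    (sol F n).2 a = F (2*a+1) n
      - (∑ p ∈ Finset.range (2*a+2), if 2*a+1 ≤ 2*p ∧ 2*p - (2*a+1) ≤ n then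
          ((sol F (n - (2*p - (2*a+1)))).1 p) * (p.choose ((2*a+1) - p) : R) else 0)
      - (∑ p ∈ Finset.range (2*a+1), if a < p ∧ 2*p - 2*a ≤ n then
          ((sol F (n - (2*p - 2*a))).2 p) * (p.choose (2*a - p) : R) else 0) := by
  rw [sol]
  simp only [dite_eq_ite]

/-- first part of the solution as a power series -/
noncomputable def g0 (F : ℕ → ℕ → R) : S R := fun e => (sol F (e 1)).1 (e 0)
/-- second part of the solution as a power series -/
noncomputable def g1 (F : ℕ → ℕ → R) : S R := fun e => (sol F (e 1)).2 (e 0)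

lemma coeff_g0 (F : ℕ → ℕ → R) (p q : ℕ) : coeff (E p q) (g0 F) = (sol F q).1 p := by
  have h : coeff (E p q) (g0 F) = (sol F ((E p q) 1)).1 ((E p q) 0) := rfl
  rw [h, E_apply0, E_apply1]

lemma coeff_g1 (F : ℕ → ℕ → R) (p q : ℕ) : coeff (E p q) (g1 F) = (sol F q).2 p := by
  have h : coeff (E p q) (g1 F) = (sol F ((E p q) 1)).2 ((E p q) 0) := rfl
  rw [h, E_apply0, E_apply1]


lemma sum_SFt_even_g0 (F : ℕ → ℕ → R) (a n : ℕ) :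
    ∑ p ∈ Finset.range (2*a+1), SFt (g0 F) (2*a) n p
      = (sol F n).1 a + ∑ p ∈ Finset.range (2*a+1),
          (if a < p ∧ 2*p - 2*a ≤ n then
            (sol F (n - (2*p - 2*a))).1 p * (p.choose (2*a - p) : R) else 0) := by
  classical
  have hmem : a ∈ Finset.range (2*a+1) := by rw [Finset.mem_range]; omega
  rw [← Finset.sum_erase_add _ _ hmem, choose_self_term, coeff_g0, add_comm]
  congr 1
  have h0 : (if a < a ∧ 2*a - 2*a ≤ n then
      (sol F (n - (2*a - 2*a))).1 a * (a.choose (2*a - a) : R) else 0) = 0 :=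
    if_neg (by omega)
  refine (Finset.sum_congr rfl fun p hp => ?_).trans (Finset.sum_erase _ h0)
  rw [Finset.mem_erase] at hp
  rw [SFt]
  by_cases hc : a < p ∧ 2*p - 2*a ≤ n
  · rw [if_pos (show 2*a ≤ 2*p ∧ 2*p - (2*a) ≤ n by omega), if_pos hc, coeff_g0]
  · rw [if_neg (show ¬(2*a ≤ 2*p ∧ 2*p - (2*a) ≤ n) by omega), if_neg hc]

lemma sum_SFt_even_g1 (F : ℕ → ℕ → R) (a n : ℕ) :
    ∑ p ∈ Finset.range (2*a+1), SFt (g1 F) (2*a) n p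
      = (sol F n).2 a + ∑ p ∈ Finset.range (2*a+1),
          (if a < p ∧ 2*p - 2*a ≤ n then
            (sol F (n - (2*p - 2*a))).2 p * (p.choose (2*a - p) : R) else 0) := by
  classical
  have hmem : a ∈ Finset.range (2*a+1) := by rw [Finset.mem_range]; omega
  have hdiag : SFt (g1 F) (2*a) n a = (sol F n).2 a := by
    rw [SFt, if_pos ⟨le_rfl, by omega⟩]
    have h1 : 2*a - 2*a = 0 := by omega
    have h2 : 2*a - a = a := by omega
    rw [h1, h2, Nat.sub_zero, Nat.choose_self, Nat.cast_one, mul_one, coeff_g1]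
  rw [← Finset.sum_erase_add _ _ hmem, hdiag, add_comm]
  congr 1
  have h0 : (if a < a ∧ 2*a - 2*a ≤ n then
      (sol F (n - (2*a - 2*a))).2 a * (a.choose (2*a - a) : R) else 0) = 0 :=
    if_neg (by omega)
  refine (Finset.sum_congr rfl fun p hp => ?_).trans (Finset.sum_erase _ h0)
  rw [Finset.mem_erase] at hp
  rw [SFt]
  by_cases hc : a < p ∧ 2*p - 2*a ≤ n
  · rw [if_pos (show 2*a ≤ 2*p ∧ 2*p - (2*a) ≤ n by omega), if_pos hc, coeff_g1]
  · rw [if_neg (show ¬(2*a ≤ 2*p ∧ 2*p - (2*a) ≤ n) by omega), if_neg hc]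

lemma decomp (f : S R) :
    msubst (mvu R) (g0 (fun m n => coeff (E m n) f)) +
      X 0 * msubst (mvu R) (g1 (fun m n => coeff (E m n) f)) = f := by
  classical
  set F : ℕ → ℕ → R := fun m n => coeff (E m n) f with hF
  apply MvPowerSeries.ext; intro e
  rw [← E_self e]
  generalize e 0 = m
  generalize e 1 = n
  rw [map_add, SF, coeff_X0_mul]
  have hFval : ∀ m' n', coeff (E m' n') f = F m' n' := fun _ _ => rfl
  rcases Nat.even_or_odd m with hm | hm
  · -- even case
    obtain ⟨a, rfl⟩ := hm
    rw [show a + a = 2*a from by ring]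
    have hB : (if 1 ≤ 2*a then coeff (E (2*a-1) n) (msubst (mvu R) (g1 F)) else 0)
        = ∑ p ∈ Finset.range (2*a),
            (if 0 < a ∧ 2*a - 1 ≤ 2*p ∧ 2*p - (2*a-1) ≤ n then
              (sol F (n - (2*p - (2*a-1)))).2 p * (p.choose ((2*a-1) - p) : R) else 0) := by
      by_cases ha0 : a = 0
      · subst ha0
        rw [if_neg (by omega)]
        simp
      · rw [if_pos (by omega), SF]
        rw [show (2*a-1)+1 = 2*a from by omega]
        refine Finset.sum_congr rfl fun p hp => ?_
        rw [SFt]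
        by_cases hc : 2*a-1 ≤ 2*p ∧ 2*p - (2*a-1) ≤ n
        · rw [if_pos hc, if_pos ⟨by omega, hc.1, hc.2⟩, coeff_g1]
        · rw [if_neg hc, if_neg (by omega)]
    rw [sum_SFt_even_g0, hB, hFval, sol_fst]
    ring
  · -- odd case
    obtain ⟨a, rfl⟩ := hm
    have hC : ∑ p ∈ Finset.range (2*a+1+1), SFt (g0 F) (2*a+1) n p
        = ∑ p ∈ Finset.range (2*a+2),
            (if 2*a+1 ≤ 2*p ∧ 2*p - (2*a+1) ≤ n then
              (sol F (n - (2*p - (2*a+1)))).1 p * (p.choose ((2*a+1) - p) : R) else 0) := by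
      rw [show 2*a+1+1 = 2*a+2 from by omega]
      refine Finset.sum_congr rfl fun p hp => ?_
      rw [SFt]
      by_cases hc : 2*a+1 ≤ 2*p ∧ 2*p - (2*a+1) ≤ n
      · rw [if_pos hc, if_pos hc, coeff_g0]
      · rw [if_neg hc, if_neg hc]
    have hD : (if 1 ≤ 2*a+1 then coeff (E (2*a+1-1) n) (msubst (mvu R) (g1 F)) else 0)
        = (sol F n).2 a + ∑ p ∈ Finset.range (2*a+1),
            (if a < p ∧ 2*p - 2*a ≤ n then
              (sol F (n - (2*p - 2*a))).2 p * (p.choose (2*a - p) : R) else 0) := by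
      rw [if_pos (by omega), show 2*a+1-1 = 2*a from by omega, SF, sum_SFt_even_g1]
    rw [hC, hD, hFval, sol_snd]
    ring

end XiAux

open XiAux


open scoped Classical in
/-- Over a ℤ/2-algebra `R` with additive power series `ξ(x) = Σ ξᵢ x^{2^i}` (`ξ₀` a unit),
the product `ξ(x)·ξ(x+t) ∈ R[[t]][[x]]` is symmetric under `x ↦ x+t` and can be written as
`g(x(x+t))` for a unique power series `g(y) ∈ R[[t]][[y]]`.
Here variable `0` is `x` (resp. `y` for `g`) and variable `1` is `t`. -/
theorem xi_product_symmetric {R : Type*} [CommRing R] [Algebra (ZMod 2) R]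
    (ξ : ℕ → R) (hξ0 : IsUnit (ξ 0))
    (Ξ : PowerSeries R)
    (hΞ : Ξ = PowerSeries.mk fun n => if ∃ i : ℕ, n = 2 ^ i then ξ (Nat.log 2 n) else 0) :
    msubst (![X 0 + X 1, X 1] : Fin 2 → MvPowerSeries (Fin 2) R)
        (psubst Ξ (X 0) * psubst Ξ (X 0 + X 1)) =
      psubst Ξ (X 0) * psubst Ξ (X 0 + X 1) ∧
    ∃! g : MvPowerSeries (Fin 2) R,
      msubst (![X 0 * (X 0 + X 1), X 1] : Fin 2 → MvPowerSeries (Fin 2) R) g =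
        psubst Ξ (X 0) * psubst Ξ (X 0 + X 1) := by

  have h2 : (2 : R) = 0 := by
    have h1 : (2 : R) = algebraMap (ZMod 2) R 2 := (map_ofNat _ 2).symm
    have h22 : (2 : ZMod 2) = 0 := rfl
    rw [h1, h22, map_zero]
  have hc0 : MvPowerSeries.constantCoeff (X 0 : S R) = 0 := by simp
  have hc01 : MvPowerSeries.constantCoeff (X 0 + X 1 : S R) = 0 := by simp
  have hψ0 : psubst Ξ (X 0 : S R) = XiS ξ (X 0) := by
    rw [hΞ]; exact psubst_eq_XiS ξ hc0
  have hψ01 : psubst Ξ (X 0 + X 1 : S R) = XiS ξ (X 0 + X 1) := by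
    rw [hΞ]; exact psubst_eq_XiS ξ hc01
  have hσeq : (![X 0 + X 1, X 1] : Fin 2 → S R) = mvσ R := rfl
  have hueq : (![X 0 * (X 0 + X 1), X 1] : Fin 2 → S R) = mvu R := rfl
  rw [hψ0, hψ01, hσeq, hueq]
  set G : S R := XiS ξ (X 0) * XiS ξ (X 0 + X 1) with hG
  have hfix : msubst (mvσ R) G = G := part1 h2 ξ
  refine ⟨hfix, ?_⟩
  set Fc : ℕ → ℕ → R := fun m n => coeff (E m n) G with hFc
  have hdec : msubst (mvu R) (g0 Fc) + X 0 * msubst (mvu R) (g1 Fc) = G := decomp G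
  -- apply the symmetry to the decomposition
  have hdec2 : msubst (mvu R) (g0 Fc) + (X 0 + X 1) * msubst (mvu R) (g1 Fc) = G := by
    have happ := congrArg (msubst (mvσ R)) hdec
    rw [msubst_add, msubst_mul const_mvσ, mσ_zero, hfix,
      mσ_fix_msubst_mvu h2, mσ_fix_msubst_mvu h2] at happ
    exact happ
  have hX1 : (X 1 : S R) * msubst (mvu R) (g1 Fc) = 0 := by
    have := sub_eq_zero.mpr (hdec2.trans hdec.symm)
    calc (X 1 : S R) * msubst (mvu R) (g1 Fc)
        = (msubst (mvu R) (g0 Fc) + (X 0 + X 1) * msubst (mvu R) (g1 Fc)) -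
          (msubst (mvu R) (g0 Fc) + X 0 * msubst (mvu R) (g1 Fc)) := by ring
      _ = 0 := this
  have hg1 : msubst (mvu R) (g1 Fc) = 0 := X1_mul_inj hX1
  have hex : msubst (mvu R) (g0 Fc) = G := by
    rw [← hdec, hg1, mul_zero, add_zero]
  refine ⟨g0 Fc, hex, ?_⟩
  intro y hy
  have hsub : msubst (mvu R) (y - g0 Fc) = 0 := by
    rw [msubst_sub, hy, hex, sub_self]
  have := msubst_mvu_inj hsub
  rwa [sub_eq_zero] at this
end

section
/- Over a ℤ/2-algebra, every power series p(x) ∈ R[[t]][[x]] invariant under the substitution x ↦ x + t can be written uniquely as g(x(x+t)) + x·h(x(x+t)) for power series g, h ∈ R[[t]][[y]], and p is invariant iff h·t = 0; in particular if t is a regular element such p equals g(x(x+t)) uniquely. -/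
open MvPowerSeries (X coeff)

namespace InvAux

open MvPowerSeries (monomial)
open Finset

variable {R : Type*} [CommRing R]

noncomputable def E (a b : ℕ) : Fin 2 →₀ ℕ := Finsupp.equivFunOnFinite.symm ![a, b]

@[simp] lemma E_apply0 (a b : ℕ) : E a b 0 = a := rfl
@[simp] lemma E_apply1 (a b : ℕ) : E a b 1 = b := rfl

lemma E_inj {a b u v : ℕ} : E a b = E u v ↔ a = u ∧ b = v := by
  constructor
  · intro h
    have h0 : E a b 0 = E u v 0 := by rw [h]
    have h1 : E a b 1 = E u v 1 := by rw [h]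
    simp at h0 h1; exact ⟨h0, h1⟩
  · rintro ⟨rfl, rfl⟩; rfl

lemma single_add_single (u v : ℕ) :
    (Finsupp.single (0 : Fin 2) u + Finsupp.single 1 v) = E u v := by
  ext i
  fin_cases i <;> simp [E, Finsupp.single_apply]

lemma single0 (u : ℕ) : (Finsupp.single (0 : Fin 2) u) = E u 0 := by
  ext i; fin_cases i <;> simp [E, Finsupp.single_apply]

lemma single1 (v : ℕ) : (Finsupp.single (1 : Fin 2) v) = E 0 v := by
  ext i; fin_cases i <;> simp [E, Finsupp.single_apply]

lemma X_pow_monomial (s : Fin 2) (n : ℕ) :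
    (X s : MvPowerSeries (Fin 2) R) ^ n = monomial (Finsupp.single s n) 1 :=
  MvPowerSeries.X_pow_eq s n

/-- coefficient of `(x+t)^c * t^m` -/
lemma coeff_xt_pow (c m a b : ℕ) :
    coeff (E a b) (((X 0 + X 1 : MvPowerSeries (Fin 2) R)) ^ c * X 1 ^ m)
      = if a ≤ c ∧ a + b = c + m then (c.choose a : R) else 0 := by
  rw [add_pow, Finset.sum_mul, map_sum]
  have hterm : ∀ j ∈ range (c + 1),
      coeff (E a b) ((X 0 : MvPowerSeries (Fin 2) R) ^ j * X 1 ^ (c - j) * (c.choose j : MvPowerSeries (Fin 2) R) * X 1 ^ m)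
        = if j = a then (if a ≤ c ∧ a + b = c + m then (c.choose a : R) else 0) else 0 := by
    intro j hj
    simp only [Finset.mem_range, Nat.lt_succ_iff] at hj
    have hre : (X 0 : MvPowerSeries (Fin 2) R) ^ j * X 1 ^ (c - j) * (c.choose j : MvPowerSeries (Fin 2) R) * X 1 ^ m
        = (c.choose j) • (monomial (E j (c - j + m)) 1) := by
      have : (X 0 : MvPowerSeries (Fin 2) R) ^ j * X 1 ^ (c - j) * (c.choose j : MvPowerSeries (Fin 2) R) * X 1 ^ m
          = (c.choose j : MvPowerSeries (Fin 2) R) * ((X 0 : MvPowerSeries (Fin 2) R) ^ j * (X 1 ^ (c - j) * X 1 ^ m)) := by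
        ring
      rw [this, ← pow_add, X_pow_monomial, X_pow_monomial,
        MvPowerSeries.monomial_mul_monomial, single_add_single, one_mul, ← nsmul_eq_mul]
    rw [hre, map_nsmul, MvPowerSeries.coeff_monomial]
    split_ifs with h1 h2 h3 h2 h3
    · rw [E_inj] at h1
      subst h2
      simp [h1.1]
    · rw [E_inj] at h1; omega
    · rw [E_inj] at h1; omega
    · subst h2; exfalso; apply h1; rw [E_inj]; omega
    · simp
    · simp
  rw [Finset.sum_congr rfl hterm, Finset.sum_ite_eq' (range (c + 1)) a]
  split_ifs with h1 h2 h2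
  · rfl
  · rfl
  · simp only [Finset.mem_range, Nat.lt_succ_iff] at h1; omega
  · rfl

/-- coefficient of `(x(x+t))^k * t^m` -/
lemma coeff_y_pow (k m a b : ℕ) :
    coeff (E a b) ((X 0 * (X 0 + X 1) : MvPowerSeries (Fin 2) R) ^ k * X 1 ^ m)
      = if k ≤ a ∧ a ≤ 2 * k ∧ a + b = 2 * k + m then (k.choose (a - k) : R) else 0 := by
  have hre : (X 0 * (X 0 + X 1) : MvPowerSeries (Fin 2) R) ^ k * X 1 ^ m
      = monomial (Finsupp.single 0 k) 1 * ((X 0 + X 1 : MvPowerSeries (Fin 2) R) ^ k * X 1 ^ m) := by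
    rw [mul_pow, ← X_pow_monomial]; ring
  rw [hre, MvPowerSeries.coeff_monomial_mul]
  have hle : (Finsupp.single (0 : Fin 2) k ≤ E a b) ↔ k ≤ a := by
    rw [Finsupp.single_le_iff, E_apply0]
  have hsub : E a b - Finsupp.single (0 : Fin 2) k = E (a - k) b := by
    ext i; fin_cases i <;> simp [E, Finsupp.tsub_apply, Finsupp.single_apply]
  split_ifs with h1 h2 h3 h2
  · rw [hsub, coeff_xt_pow, if_pos (by rw [hle] at h1; omega), one_mul]
  · rw [hsub, coeff_xt_pow, if_neg (by rw [hle] at h1; omega), mul_zero]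
  · rw [hle] at h1; omega
  · rfl

lemma coeff_X0_mul (u : MvPowerSeries (Fin 2) R) (a b : ℕ) :
    coeff (E a b) (X 0 * u) = if a = 0 then 0 else coeff (E (a - 1) b) u := by
  rw [show (X 0 : MvPowerSeries (Fin 2) R) = monomial (Finsupp.single 0 1) 1 by
    rw [← X_pow_monomial, pow_one], MvPowerSeries.coeff_monomial_mul]
  have hle : (Finsupp.single (0 : Fin 2) 1 ≤ E a b) ↔ 1 ≤ a := by
    rw [Finsupp.single_le_iff, E_apply0]
  have hsub : E a b - Finsupp.single (0 : Fin 2) 1 = E (a - 1) b := by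
    ext i; fin_cases i <;> simp [E, Finsupp.tsub_apply, Finsupp.single_apply]
  split_ifs with h1 h2 h2
  · rw [hle] at h1; omega
  · rw [hsub, one_mul]
  · rfl
  · rw [hle] at h1; omega

lemma coeff_X1_mul (u : MvPowerSeries (Fin 2) R) (a b : ℕ) :
    coeff (E a b) (X 1 * u) = if b = 0 then 0 else coeff (E a (b - 1)) u := by
  rw [show (X 1 : MvPowerSeries (Fin 2) R) = monomial (Finsupp.single 1 1) 1 by
    rw [← X_pow_monomial, pow_one], MvPowerSeries.coeff_monomial_mul]
  have hle : (Finsupp.single (1 : Fin 2) 1 ≤ E a b) ↔ 1 ≤ b := by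
    rw [Finsupp.single_le_iff, E_apply1]
  have hsub : E a b - Finsupp.single (1 : Fin 2) 1 = E a (b - 1) := by
    ext i; fin_cases i <;> simp [E, Finsupp.tsub_apply, Finsupp.single_apply]
  split_ifs with h1 h2 h2
  · rw [hle] at h1; omega
  · rw [hsub, one_mul]
  · rfl
  · rw [hle] at h1; omega

lemma eq_E (e : Fin 2 →₀ ℕ) : e = E (e 0) (e 1) := by
  ext i; fin_cases i <;> rfl

lemma E_sum (a b : ℕ) : ((E a b).sum fun _ k => k) = a + b := by
  rw [Finsupp.sum_fintype _ _ (fun _ => rfl), Fin.sum_univ_two, E_apply0, E_apply1]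

lemma mv_ext {f g : MvPowerSeries (Fin 2) R}
    (h : ∀ a b, coeff (E a b) f = coeff (E a b) g) : f = g :=
  MvPowerSeries.ext fun e => by rw [eq_E e]; exact h _ _

lemma X1_regular {u : MvPowerSeries (Fin 2) R} (h : X 1 * u = 0) : u = 0 := by
  have key : ∀ a b, coeff (E a b) u = 0 := by
    intro a b
    have h2 := congrArg (coeff (E a (b + 1))) h
    rw [coeff_X1_mul, if_neg (Nat.succ_ne_zero _), map_zero, Nat.add_sub_cancel] at h2
    exact h2
  apply MvPowerSeries.ext
  intro e
  have he : e = E (e 0) (e 1) := by ext i; fin_cases i <;> rfl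
  rw [map_zero, he, key]


/-- coefficient of `g(x(x+t))` at `(a,b)` in terms of coefficients `f` of `g`. -/
def corr (f : ℕ → ℕ → R) (a b : ℕ) : R :=
  ∑ k ∈ range (a + b + 1),
    if k ≤ a ∧ a ≤ 2 * k ∧ 2 * k ≤ a + b then (Nat.choose k (a - k) : R) * f k (a + b - 2 * k)
    else 0

/-- sub-diagonal part -/
def corr' (f : ℕ → ℕ → R) (a b : ℕ) : R :=
  ∑ k ∈ range (a + b + 1),
    if k ≤ a ∧ a < 2 * k ∧ 2 * k ≤ a + b then (Nat.choose k (a - k) : R) * f k (a + b - 2 * k)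
    else 0

/-- coefficient of `p(x+t, t)` at `(a,b)` in terms of coefficients `f` of `p`. -/
def scor (f : ℕ → ℕ → R) (a b : ℕ) : R :=
  ∑ c ∈ range (a + b + 1),
    if a ≤ c ∧ c ≤ a + b then (Nat.choose c a : R) * f c (a + b - c) else 0

lemma corr_even (f : ℕ → ℕ → R) (k b : ℕ) :
    corr f (2 * k) b = f k b + corr' f (2 * k) b := by
  unfold corr corr'
  have h1 : ∀ j ∈ range (2 * k + b + 1),
      (if j ≤ 2 * k ∧ 2 * k ≤ 2 * j ∧ 2 * j ≤ 2 * k + b then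
        (Nat.choose j (2 * k - j) : R) * f j (2 * k + b - 2 * j) else 0)
      = (if j = k then f k b else 0)
        + (if j ≤ 2 * k ∧ 2 * k < 2 * j ∧ 2 * j ≤ 2 * k + b then
            (Nat.choose j (2 * k - j) : R) * f j (2 * k + b - 2 * j) else 0) := by
    intro j _
    rcases eq_or_ne j k with rfl | hne
    · have hc : j ≤ 2 * j ∧ 2 * j ≤ 2 * j ∧ 2 * j ≤ 2 * j + b := by omega
      rw [if_pos hc, if_pos rfl, if_neg (by omega)]
      have : 2 * j - j = j := by omega
      have h2 : 2 * j + b - 2 * j = b := by omega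
      simp [this, h2]
    · rw [if_neg hne, zero_add]
      apply if_congr _ rfl rfl
      omega
  rw [Finset.sum_congr rfl h1, Finset.sum_add_distrib, Finset.sum_ite_eq' (range (2*k+b+1)) k]
  rw [if_pos (by simp; omega)]

lemma corr_odd (f : ℕ → ℕ → R) (k b : ℕ) (hk : Odd k) :
    corr f k b = corr' f k b := by
  unfold corr corr'
  apply Finset.sum_congr rfl
  intro j _
  apply if_congr _ rfl rfl
  obtain ⟨c, rfl⟩ := hk
  omega

lemma corr'_congr {f g : ℕ → ℕ → R} (a b : ℕ) (h : ∀ k m, m < b → f k m = g k m) :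
    corr' f a b = corr' g a b := by
  unfold corr'
  apply Finset.sum_congr rfl
  intro j _
  split_ifs with hc
  · rw [h j _ (by omega)]
  · rfl

lemma sum_piFinset_two {M : Type*} [AddCommMonoid M] (n : ℕ) (F : (Fin 2 → ℕ) → M) :
    ∑ d ∈ Fintype.piFinset (fun _ : Fin 2 => range n), F d
      = ∑ k ∈ range n, ∑ m ∈ range n, F ![k, m] := by
  rw [show (∑ k ∈ range n, ∑ m ∈ range n, F ![k, m])
      = ∑ q ∈ range n ×ˢ range n, F ![q.1, q.2] from (Finset.sum_product (range n) (range n) (fun q => F ![q.1, q.2])).symm]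
  apply Finset.sum_nbij' (fun d => (d 0, d 1)) (fun q => ![q.1, q.2])
  · intro d hd
    rw [Fintype.mem_piFinset] at hd
    rw [Finset.mem_product]
    exact ⟨hd 0, hd 1⟩
  · intro q hq
    rw [Finset.mem_product] at hq
    rw [Fintype.mem_piFinset]
    intro i; fin_cases i
    · exact hq.1
    · exact hq.2
  · intro d _; funext i; fin_cases i <;> rfl
  · intro q _; rfl
  · intro d _
    congr 1
    funext i; fin_cases i <;> rfl

lemma symm_eq_E (d : Fin 2 → ℕ) :
    Finsupp.equivFunOnFinite.symm d = E (d 0) (d 1) := by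
  unfold E
  congr 1
  funext i; fin_cases i <;> rfl

lemma coeff_msubst_y (g : MvPowerSeries (Fin 2) R) (a b : ℕ) :
    coeff (E a b) (msubst (![X 0 * (X 0 + X 1), X 1] : Fin 2 → MvPowerSeries (Fin 2) R) g)
      = corr (fun k m => coeff (E k m) g) a b := by
  have h0 : coeff (E a b) (msubst (![X 0 * (X 0 + X 1), X 1] : Fin 2 → MvPowerSeries (Fin 2) R) g)
      = ∑ d ∈ Fintype.piFinset (fun _ : Fin 2 => range (a + b + 1)),
          coeff (Finsupp.equivFunOnFinite.symm d) g *
            coeff (E a b) ((X 0 * (X 0 + X 1) : MvPowerSeries (Fin 2) R) ^ d 0 * X 1 ^ d 1) := by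
    rw [MvPowerSeries.coeff_apply]
    unfold msubst
    rw [E_sum]
    apply Finset.sum_congr rfl
    intro d _
    congr 1
    rw [Fin.prod_univ_two]
    simp only [Matrix.cons_val_zero, Matrix.cons_val_one, Matrix.head_cons]
  rw [h0, sum_piFinset_two]
  unfold corr
  apply Finset.sum_congr rfl
  intro k hk
  have hin : ∀ m ∈ range (a + b + 1),
      coeff (Finsupp.equivFunOnFinite.symm ![k, m]) g *
        coeff (E a b) ((X 0 * (X 0 + X 1) : MvPowerSeries (Fin 2) R) ^ (![k, m] : Fin 2 → ℕ) 0 * X 1 ^ (![k, m] : Fin 2 → ℕ) 1)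
      = if m = a + b - 2 * k then
          (if k ≤ a ∧ a ≤ 2 * k ∧ 2 * k ≤ a + b then
            (Nat.choose k (a - k) : R) * coeff (E k (a + b - 2 * k)) g else 0)
        else 0 := by
    intro m _
    rw [symm_eq_E]
    simp only [Matrix.cons_val_zero, Matrix.cons_val_one, Matrix.head_cons]
    rw [coeff_y_pow]
    split_ifs with h1 h2 h3 h2 h3
    · subst h2; rw [mul_comm]
    · omega
    · omega
    · omega
    · exact mul_zero _
    · exact mul_zero _
  rw [Finset.sum_congr rfl hin, Finset.sum_ite_eq' (range (a + b + 1)) (a + b - 2 * k)]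
  rw [if_pos (by rw [Finset.mem_range]; omega)]

lemma coeff_msubst_s (p : MvPowerSeries (Fin 2) R) (a b : ℕ) :
    coeff (E a b) (msubst (![X 0 + X 1, X 1] : Fin 2 → MvPowerSeries (Fin 2) R) p)
      = scor (fun k m => coeff (E k m) p) a b := by
  have h0 : coeff (E a b) (msubst (![X 0 + X 1, X 1] : Fin 2 → MvPowerSeries (Fin 2) R) p)
      = ∑ d ∈ Fintype.piFinset (fun _ : Fin 2 => range (a + b + 1)),
          coeff (Finsupp.equivFunOnFinite.symm d) p *
            coeff (E a b) ((X 0 + X 1 : MvPowerSeries (Fin 2) R) ^ d 0 * X 1 ^ d 1) := by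
    rw [MvPowerSeries.coeff_apply]
    unfold msubst
    rw [E_sum]
    apply Finset.sum_congr rfl
    intro d _
    congr 1
    rw [Fin.prod_univ_two]
    simp only [Matrix.cons_val_zero, Matrix.cons_val_one, Matrix.head_cons]
  rw [h0, sum_piFinset_two]
  unfold scor
  apply Finset.sum_congr rfl
  intro c hc
  have hin : ∀ m ∈ range (a + b + 1),
      coeff (Finsupp.equivFunOnFinite.symm ![c, m]) p *
        coeff (E a b) ((X 0 + X 1 : MvPowerSeries (Fin 2) R) ^ (![c, m] : Fin 2 → ℕ) 0 * X 1 ^ (![c, m] : Fin 2 → ℕ) 1)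
      = if m = a + b - c then
          (if a ≤ c ∧ c ≤ a + b then (Nat.choose c a : R) * coeff (E c (a + b - c)) p else 0)
        else 0 := by
    intro m _
    rw [symm_eq_E]
    simp only [Matrix.cons_val_zero, Matrix.cons_val_one, Matrix.head_cons]
    rw [coeff_xt_pow]
    split_ifs with h1 h2 h3 h2 h3
    · subst h2; rw [mul_comm]
    · omega
    · omega
    · omega
    · exact mul_zero _
    · exact mul_zero _
  rw [Finset.sum_congr rfl hin, Finset.sum_ite_eq' (range (a + b + 1)) (a + b - c)]
  rw [if_pos (by rw [Finset.mem_range]; omega)]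

lemma msubst_add {m l : ℕ} (A : Fin m → MvPowerSeries (Fin l) R)
    (f g : MvPowerSeries (Fin m) R) :
    msubst A (f + g) = msubst A f + msubst A g := by
  apply MvPowerSeries.ext
  intro e
  simp only [MvPowerSeries.coeff_apply, msubst, map_add, add_mul, Finset.sum_add_distrib]

lemma msubst_zero {m l : ℕ} (A : Fin m → MvPowerSeries (Fin l) R) :
    msubst A (0 : MvPowerSeries (Fin m) R) = 0 := by
  apply MvPowerSeries.ext
  intro e
  simp only [MvPowerSeries.coeff_apply, msubst, map_zero, zero_mul, Finset.sum_const_zero]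

lemma key_binom_zmod (k a : ℕ) :
    (∑ c ∈ Icc k (2 * k), (c.choose a : ZMod 2) * (k.choose (c - k) : ZMod 2))
      = if k ≤ a ∧ a ≤ 2 * k then (k.choose (a - k) : ZMod 2) else 0 := by
  have hq : (∑ j ∈ range (k + 1), ((Polynomial.X + 1 : Polynomial (ZMod 2)) ^ (k + j) * Polynomial.C ((k.choose j : ZMod 2))))
      = (Polynomial.X + 1) ^ k * Polynomial.X ^ k := by
    have hXX : (Polynomial.X + 1 + 1 : Polynomial (ZMod 2)) = Polynomial.X := by
      have h20 : (2 : Polynomial (ZMod 2)) = 0 := by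
        have := CharP.cast_eq_zero (Polynomial (ZMod 2)) 2
        simpa using this
      linear_combination h20
    calc ∑ j ∈ range (k + 1), ((Polynomial.X + 1 : Polynomial (ZMod 2)) ^ (k + j) * Polynomial.C ((k.choose j : ZMod 2)))
        = ∑ j ∈ range (k + 1),
            ((Polynomial.X + 1 : Polynomial (ZMod 2)) ^ j * 1 ^ (k - j) * (k.choose j : Polynomial (ZMod 2))) * (Polynomial.X + 1) ^ k := by
          apply Finset.sum_congr rfl
          intro j _
          rw [pow_add, Polynomial.C_eq_natCast]
          ring
      _ = ((Polynomial.X + 1 : Polynomial (ZMod 2)) + 1) ^ k * (Polynomial.X + 1) ^ k := by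
          rw [← Finset.sum_mul, ← add_pow]
      _ = (Polynomial.X + 1) ^ k * Polynomial.X ^ k := by rw [hXX]; ring
  have hcoeff := congrArg (fun q : Polynomial (ZMod 2) => q.coeff a) hq
  simp only [Polynomial.finset_sum_coeff, Polynomial.coeff_mul_C,
    Polynomial.coeff_X_add_one_pow, Polynomial.coeff_mul_X_pow'] at hcoeff
  have hIcc : (∑ c ∈ Icc k (2 * k), (c.choose a : ZMod 2) * (k.choose (c - k) : ZMod 2))
      = ∑ j ∈ range (k + 1), ((k + j).choose a : ZMod 2) * (k.choose j : ZMod 2) := by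
    have h1 : Icc k (2 * k) = Ico k (2 * k + 1) := by
      rw [Finset.Ico_add_one_right_eq_Icc]
    rw [h1, Finset.sum_Ico_eq_sum_range]
    have h2 : 2 * k + 1 - k = k + 1 := by omega
    rw [h2]
    apply Finset.sum_congr rfl
    intro j _
    have hj : k + j - k = j := by omega
    rw [hj]
  rw [hIcc, hcoeff]
  split_ifs with h1 h2 h2
  · rfl
  · have : k.choose (a - k) = 0 := Nat.choose_eq_zero_of_lt (by omega)
    rw [this, Nat.cast_zero]
  · omega
  · rfl

lemma key_binom {R : Type*} [CommRing R] [Algebra (ZMod 2) R] (k a : ℕ) :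
    (∑ c ∈ Icc k (2 * k), (c.choose a : R) * (k.choose (c - k) : R))
      = if k ≤ a ∧ a ≤ 2 * k then (k.choose (a - k) : R) else 0 := by
  have := congrArg (algebraMap (ZMod 2) R) (key_binom_zmod k a)
  rw [map_sum, apply_ite (algebraMap (ZMod 2) R), map_zero] at this
  simp only [map_mul, map_natCast] at this
  exact this

lemma scor_corr {R : Type*} [CommRing R] [Algebra (ZMod 2) R] (f : ℕ → ℕ → R) (a b : ℕ) :
    scor (fun c m => corr f c m) a b = corr f a b := by
  unfold scor corr
  have h1 : ∀ c ∈ range (a + b + 1),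
      (if a ≤ c ∧ c ≤ a + b then
        (Nat.choose c a : R) * (∑ k ∈ range (c + (a + b - c) + 1),
          if k ≤ c ∧ c ≤ 2 * k ∧ 2 * k ≤ c + (a + b - c) then
            (Nat.choose k (c - k) : R) * f k (c + (a + b - c) - 2 * k) else 0)
        else 0)
      = ∑ k ∈ range (a + b + 1),
          (if a ≤ c ∧ k ≤ c ∧ c ≤ 2 * k ∧ 2 * k ≤ a + b then
            (Nat.choose c a : R) * (Nat.choose k (c - k) : R) * f k (a + b - 2 * k) else 0) := by
    intro c hc
    rw [mem_range] at hc
    split_ifs with h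
    · have hcN : c + (a + b - c) = a + b := by omega
      rw [hcN, Finset.mul_sum]
      apply sum_congr rfl
      intro k _
      rw [mul_ite, mul_zero, ← mul_assoc]
      apply if_congr _ rfl rfl
      omega
    · symm
      apply Finset.sum_eq_zero
      intro k _
      rw [if_neg (by omega)]
  rw [Finset.sum_congr rfl h1, Finset.sum_comm]
  apply sum_congr rfl
  intro k _
  by_cases hk : 2 * k ≤ a + b
  · have h2 : ∀ c ∈ range (a + b + 1),
        (if a ≤ c ∧ k ≤ c ∧ c ≤ 2 * k ∧ 2 * k ≤ a + b then
          (Nat.choose c a : R) * (Nat.choose k (c - k) : R) * f k (a + b - 2 * k) else 0)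
        = (if c ∈ Icc k (2 * k) then (Nat.choose c a : R) * (Nat.choose k (c - k) : R) else 0)
            * f k (a + b - 2 * k) := by
      intro c _
      simp only [mem_Icc]
      rw [ite_mul, zero_mul]
      by_cases hac : a ≤ c
      · apply if_congr _ rfl rfl; omega
      · rw [if_neg (by omega)]
        split_ifs with h3
        · have : (Nat.choose c a : R) = 0 := by
            rw [Nat.choose_eq_zero_of_lt (by omega), Nat.cast_zero]
          rw [this, zero_mul, zero_mul]
        · rfl
    rw [Finset.sum_congr rfl h2, ← Finset.sum_mul, Finset.sum_ite_mem,
      Finset.inter_eq_right.mpr (by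
        intro c hcm
        rw [mem_Icc] at hcm
        rw [mem_range]
        omega), key_binom, ite_mul, zero_mul]
    apply if_congr _ rfl rfl
    omega
  · rw [if_neg (by omega)]
    apply Finset.sum_eq_zero
    intro c _
    rw [if_neg (by omega)]

lemma scor_shift (f : ℕ → ℕ → R) (a b : ℕ) :
    scor (fun c m => if c = 0 then 0 else f (c - 1) m) a b
      = (if a = 0 then 0 else scor f (a - 1) b) + (if b = 0 then 0 else scor f a (b - 1)) := by
  have hL : scor (fun c m => if c = 0 then 0 else f (c - 1) m) a b
      = ∑ c ∈ range (a + b),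
          (if a ≤ c + 1 then ((c + 1).choose a : R) * f c (a + b - 1 - c) else 0) := by
    unfold scor
    have hbeta : ∀ c m, (fun c m => if c = 0 then 0 else f (c - 1) m) c m
        = if c = 0 then 0 else f (c - 1) m := fun _ _ => rfl
    simp only [hbeta]
    rw [Finset.sum_range_succ']
    have hg0 : (if a ≤ 0 ∧ 0 ≤ a + b then
        ((Nat.choose 0 a : R)) * (if (0 : ℕ) = 0 then 0 else f (0 - 1) (a + b - 0)) else 0) = 0 := by
      split_ifs <;> simp_all
    rw [hg0, add_zero]
    apply sum_congr rfl
    intro c hc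
    rw [mem_range] at hc
    rw [if_neg (Nat.succ_ne_zero c)]
    have e2 : a + b - (c + 1) = a + b - 1 - c := by omega
    have e1 : c + 1 - 1 = c := rfl
    rw [e2, e1]
    split_ifs with h2 h3 h3 <;> first | rfl | omega
  rw [hL]
  rcases Nat.eq_zero_or_pos a with ha | ha
  · subst ha
    rw [if_pos rfl, zero_add]
    rcases Nat.eq_zero_or_pos b with hb | hb
    · subst hb
      simp
    · rw [if_neg (by omega)]
      unfold scor
      have e3 : 0 + (b - 1) + 1 = 0 + b := by omega
      rw [e3]
      simp only [zero_add]
      apply sum_congr rfl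
      intro c hc
      rw [mem_range] at hc
      rw [if_pos (by omega : (0:ℕ) ≤ c + 1), if_pos (by omega : 0 ≤ c ∧ c ≤ b - 1)]
      simp
  · rw [if_neg (by omega)]
    have hA : scor f (a - 1) b
        = ∑ c ∈ range (a + b),
            (if a - 1 ≤ c then ((c).choose (a - 1) : R) * f c (a + b - 1 - c) else 0) := by
      unfold scor
      have e5 : a - 1 + b + 1 = a + b := by omega
      rw [e5]
      apply sum_congr rfl
      intro c hc
      rw [mem_range] at hc
      have e6 : a - 1 + b - c = a + b - 1 - c := by omega
      rw [e6]
      split_ifs <;> first | rfl | omega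
    have hB : (if b = 0 then 0 else scor f a (b - 1))
        = ∑ c ∈ range (a + b),
            (if a ≤ c ∧ c + 1 ≤ a + b - 1 + 1 then ((c).choose a : R) * f c (a + b - 1 - c) else 0) := by
      rcases Nat.eq_zero_or_pos b with hb | hb
      · subst hb
        rw [if_pos rfl]
        symm
        apply Finset.sum_eq_zero
        intro c hc
        rw [mem_range] at hc
        rw [if_neg (by omega)]
      · rw [if_neg (by omega)]
        unfold scor
        have e7 : a + (b - 1) + 1 = a + b := by omega
        rw [e7]
        apply sum_congr rfl
        intro c hc
        rw [mem_range] at hc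
        have e8 : a + (b - 1) - c = a + b - 1 - c := by omega
        apply if_congr _ _ rfl
        · omega
        · rw [e8]
    rw [hA, hB, ← Finset.sum_add_distrib]
    apply sum_congr rfl
    intro c hc
    rw [mem_range] at hc
    have hpas : ((c + 1).choose a : R) = (c.choose (a - 1) : R) + (c.choose a : R) := by
      have : (c + 1).choose a = c.choose (a - 1) + c.choose a := by
        obtain ⟨a', rfl⟩ := Nat.exists_eq_succ_of_ne_zero (by omega : a ≠ 0)
        simp [Nat.choose_succ_succ]
      rw [this, Nat.cast_add]
    by_cases h1 : a - 1 ≤ c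
    · rw [if_pos (by omega), if_pos h1, hpas, add_mul]
      congr 1
      by_cases h2 : a ≤ c ∧ c + 1 ≤ a + b - 1 + 1
      · rw [if_pos h2]
      · rw [if_neg h2]
        have : c.choose a = 0 := Nat.choose_eq_zero_of_lt (by omega)
        rw [this, Nat.cast_zero, zero_mul]
    · rw [if_neg (by omega), if_neg h1, if_neg (by omega), add_zero]
/-- coefficient function of a power series -/
noncomputable def cf (f : MvPowerSeries (Fin 2) R) : ℕ → ℕ → R := fun a b => coeff (E a b) f

/-- series from coefficient function -/
def ofFn (f : ℕ → ℕ → R) : MvPowerSeries (Fin 2) R := fun e => f (e 0) (e 1)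

lemma cf_ofFn (f : ℕ → ℕ → R) (a b : ℕ) : cf (ofFn f) a b = f a b := rfl

/-- the recursive solution of the triangular system -/
noncomputable def sol (p : MvPowerSeries (Fin 2) R) (m : ℕ) : (ℕ → R) × (ℕ → R) :=
  (fun k => cf p (2 * k) m
      - corr' (fun k' m' => if h : m' < m then (sol p m').1 k' else 0) (2 * k) m
      - (if k = 0 then 0
         else corr' (fun k' m' => if h : m' < m then (sol p m').2 k' else 0) (2 * k - 1) m),
   fun k => cf p (2 * k + 1) m
      - corr' (fun k' m' => if h : m' < m then (sol p m').1 k' else 0) (2 * k + 1) m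
      - corr' (fun k' m' => if h : m' < m then (sol p m').2 k' else 0) (2 * k) m)
  termination_by m

noncomputable def Gs (p : MvPowerSeries (Fin 2) R) : ℕ → ℕ → R := fun k m => (sol p m).1 k
noncomputable def Hs (p : MvPowerSeries (Fin 2) R) : ℕ → ℕ → R := fun k m => (sol p m).2 k

lemma trunc1 (p : MvPowerSeries (Fin 2) R) (a m : ℕ) :
    corr' (fun k' m' => if _ : m' < m then (sol p m').1 k' else 0) a m = corr' (Gs p) a m :=
  corr'_congr _ _ (fun k' m' hm => by rw [dif_pos hm]; rfl)

lemma trunc2 (p : MvPowerSeries (Fin 2) R) (a m : ℕ) :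
    corr' (fun k' m' => if _ : m' < m then (sol p m').2 k' else 0) a m = corr' (Hs p) a m :=
  corr'_congr _ _ (fun k' m' hm => by rw [dif_pos hm]; rfl)

lemma Gs_eq (p : MvPowerSeries (Fin 2) R) (k m : ℕ) :
    Gs p k m = cf p (2 * k) m - corr' (Gs p) (2 * k) m
      - (if k = 0 then 0 else corr' (Hs p) (2 * k - 1) m) := by
  have h : Gs p k m = (sol p m).1 k := rfl
  rw [h, sol]
  simp only
  rw [trunc1, trunc2]

lemma Hs_eq (p : MvPowerSeries (Fin 2) R) (k m : ℕ) :
    Hs p k m = cf p (2 * k + 1) m - corr' (Gs p) (2 * k + 1) m - corr' (Hs p) (2 * k) m := by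
  have h : Hs p k m = (sol p m).2 k := rfl
  rw [h, sol]
  simp only
  rw [trunc1, trunc2]

lemma tri_exists (p : MvPowerSeries (Fin 2) R) (a b : ℕ) :
    corr (Gs p) a b + (if a = 0 then 0 else corr (Hs p) (a - 1) b) = cf p a b := by
  rcases Nat.even_or_odd a with ⟨k, hk⟩ | ⟨k, hk⟩
  · subst hk
    rw [show k + k = 2 * k from by ring] at *
    rw [corr_even]
    rcases Nat.eq_zero_or_pos k with rfl | hkpos
    · rw [if_pos (by omega)]
      have hG := Gs_eq p 0 b
      rw [if_pos rfl] at hG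
      rw [hG]
      ring
    · rw [if_neg (by omega)]
      rw [corr_odd (Hs p) (2 * k - 1) b ⟨k - 1, by omega⟩]
      have hG := Gs_eq p k b
      rw [if_neg (by omega)] at hG
      rw [hG]
      ring
  · subst hk
    rw [if_neg (by omega), corr_odd (Gs p) (2 * k + 1) b ⟨k, rfl⟩,
      show 2 * k + 1 - 1 = 2 * k from by omega, corr_even, Hs_eq]
    ring

lemma tri_unique {G1 H1 G2 H2 : ℕ → ℕ → R}
    (heq : ∀ a b, corr G1 a b + (if a = 0 then 0 else corr H1 (a - 1) b)
        = corr G2 a b + (if a = 0 then 0 else corr H2 (a - 1) b)) :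
    ∀ m k, G1 k m = G2 k m ∧ H1 k m = H2 k m := by
  intro m
  induction m using Nat.strong_induction_on with
  | _ m ih =>
    intro k
    have hGc : ∀ a, corr' G1 a m = corr' G2 a m :=
      fun a => corr'_congr _ _ (fun k' m' hm' => (ih m' hm' k').1)
    have hHc : ∀ a, corr' H1 a m = corr' H2 a m :=
      fun a => corr'_congr _ _ (fun k' m' hm' => (ih m' hm' k').2)
    constructor
    · have h1 := heq (2 * k) m
      rw [corr_even, corr_even, hGc] at h1
      rcases Nat.eq_zero_or_pos k with rfl | hkpos
      · rw [if_pos (by omega), if_pos (by omega)] at h1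
        linear_combination h1
      · rw [if_neg (by omega), if_neg (by omega),
          corr_odd H1 (2 * k - 1) m ⟨k - 1, by omega⟩,
          corr_odd H2 (2 * k - 1) m ⟨k - 1, by omega⟩, hHc] at h1
        linear_combination h1
    · have h1 := heq (2 * k + 1) m
      rw [if_neg (by omega), if_neg (by omega),
        corr_odd G1 (2 * k + 1) m ⟨k, rfl⟩, corr_odd G2 (2 * k + 1) m ⟨k, rfl⟩, hGc,
        show 2 * k + 1 - 1 = 2 * k from by omega, corr_even, corr_even, hHc] at h1
      linear_combination h1

section Assembly

variable {R : Type*} [CommRing R]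

lemma cf_funext (g : MvPowerSeries (Fin 2) R) :
    (fun k m => coeff (E k m) g) = cf g := rfl

lemma cf_ofFn' (f : ℕ → ℕ → R) : cf (ofFn f) = f := rfl

lemma corr_zeroF (a b : ℕ) : corr (fun _ _ => (0 : R)) a b = 0 := by
  unfold corr
  apply Finset.sum_eq_zero
  intro k _
  split_ifs <;> simp

lemma decomp_exists_unique (p : MvPowerSeries (Fin 2) R) :
    ∃! gh : MvPowerSeries (Fin 2) R × MvPowerSeries (Fin 2) R,
      p = msubst (![X 0 * (X 0 + X 1), X 1] : Fin 2 → MvPowerSeries (Fin 2) R) gh.1 +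
          X 0 * msubst (![X 0 * (X 0 + X 1), X 1] : Fin 2 → MvPowerSeries (Fin 2) R) gh.2 := by
  refine ⟨(ofFn (fun k m => Gs p k m), ofFn (fun k m => Hs p k m)), ?_, ?_⟩
  · apply mv_ext
    intro a b
    rw [map_add, coeff_msubst_y, coeff_X0_mul, coeff_msubst_y, cf_funext, cf_funext,
      cf_ofFn', cf_ofFn']
    exact (tri_exists p a b).symm
  · rintro ⟨g, h⟩ hgh
    simp only at hgh
    have key : ∀ a b, corr (cf g) a b + (if a = 0 then 0 else corr (cf h) (a - 1) b)
        = corr (Gs p) a b + (if a = 0 then 0 else corr (Hs p) (a - 1) b) := by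
      intro a b
      have h1 : cf p a b = corr (cf g) a b + (if a = 0 then 0 else corr (cf h) (a - 1) b) := by
        unfold cf
        rw [hgh, map_add, coeff_msubst_y, coeff_X0_mul, coeff_msubst_y, cf_funext, cf_funext]
      rw [← h1, tri_exists p a b]
    have huniq := tri_unique key
    have hg : g = ofFn (fun k m => Gs p k m) := by
      apply mv_ext
      intro a b
      exact (huniq b a).1
    have hh : h = ofFn (fun k m => Hs p k m) := by
      apply mv_ext
      intro a b
      exact (huniq b a).2
    rw [Prod.mk.injEq]
    exact ⟨hg, hh⟩

lemma msubst_y_eq_zero {h : MvPowerSeries (Fin 2) R}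
    (hz : msubst (![X 0 * (X 0 + X 1), X 1] : Fin 2 → MvPowerSeries (Fin 2) R) h = 0) :
    h = 0 := by
  have key : ∀ a b, corr (cf h) a b + (if a = 0 then 0 else corr (fun _ _ => (0:R)) (a - 1) b)
      = corr (fun _ _ => (0:R)) a b + (if a = 0 then 0 else corr (fun _ _ => (0:R)) (a - 1) b) := by
    intro a b
    have h1 : corr (cf h) a b = 0 := by
      rw [← cf_funext, ← coeff_msubst_y, hz, map_zero]
    simp [h1, corr_zeroF]
  have huniq := tri_unique key
  apply mv_ext
  intro a b
  rw [map_zero]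
  exact (huniq b a).1

lemma sigma_msubst_y [Algebra (ZMod 2) R] (g : MvPowerSeries (Fin 2) R) :
    msubst (![X 0 + X 1, X 1] : Fin 2 → MvPowerSeries (Fin 2) R)
      (msubst (![X 0 * (X 0 + X 1), X 1] : Fin 2 → MvPowerSeries (Fin 2) R) g)
    = msubst (![X 0 * (X 0 + X 1), X 1] : Fin 2 → MvPowerSeries (Fin 2) R) g := by
  apply mv_ext
  intro a b
  rw [coeff_msubst_s, coeff_msubst_y]
  have h1 : (fun k m => coeff (E k m)
      (msubst (![X 0 * (X 0 + X 1), X 1] : Fin 2 → MvPowerSeries (Fin 2) R) g))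
      = fun c m => corr (cf g) c m := by
    funext c m
    rw [coeff_msubst_y, cf_funext]
  rw [h1, scor_corr, cf_funext]

lemma sigma_X0_mul [Algebra (ZMod 2) R] (u : MvPowerSeries (Fin 2) R) :
    msubst (![X 0 + X 1, X 1] : Fin 2 → MvPowerSeries (Fin 2) R) (X 0 * u)
    = X 0 * msubst (![X 0 + X 1, X 1] : Fin 2 → MvPowerSeries (Fin 2) R) u
      + X 1 * msubst (![X 0 + X 1, X 1] : Fin 2 → MvPowerSeries (Fin 2) R) u := by
  apply mv_ext
  intro a b
  rw [coeff_msubst_s, map_add, coeff_X0_mul, coeff_X1_mul, coeff_msubst_s, coeff_msubst_s]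
  have h1 : (fun k m => coeff (E k m) (X 0 * u))
      = fun c m => if c = 0 then 0 else cf u (c - 1) m := by
    funext c m
    rw [coeff_X0_mul]
    rfl
  rw [h1, scor_shift, cf_funext]

lemma sigma_decomp [Algebra (ZMod 2) R] (p g h : MvPowerSeries (Fin 2) R)
    (hp : p = msubst (![X 0 * (X 0 + X 1), X 1] : Fin 2 → MvPowerSeries (Fin 2) R) g +
          X 0 * msubst (![X 0 * (X 0 + X 1), X 1] : Fin 2 → MvPowerSeries (Fin 2) R) h) :
    msubst (![X 0 + X 1, X 1] : Fin 2 → MvPowerSeries (Fin 2) R) p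
    = p + X 1 * msubst (![X 0 * (X 0 + X 1), X 1] : Fin 2 → MvPowerSeries (Fin 2) R) h := by
  rw [hp, msubst_add, sigma_msubst_y, sigma_X0_mul, sigma_msubst_y]
  ring

end Assembly

end InvAux

/-- Over a ℤ/2-algebra, every power series `p ∈ R[[t]][[x]]` can be written uniquely as
`g(x(x+t)) + x·h(x(x+t))` for power series `g, h ∈ R[[t]][[y]]`; such `p` is invariant
under `x ↦ x+t` iff `h·t = 0`; in particular (since `t` is a regular element) an invariant
`p` equals `g(x(x+t))` for a unique `g`.
Here variable `0` is `x` (resp. `y` for `g`, `h`) and variable `1` is `t`. -/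
theorem invariants_of_involution {R : Type*} [CommRing R] [Algebra (ZMod 2) R]
    (p : MvPowerSeries (Fin 2) R) :
    (∃! gh : MvPowerSeries (Fin 2) R × MvPowerSeries (Fin 2) R,
      p = msubst (![X 0 * (X 0 + X 1), X 1] : Fin 2 → MvPowerSeries (Fin 2) R) gh.1 +
          X 0 * msubst (![X 0 * (X 0 + X 1), X 1] : Fin 2 → MvPowerSeries (Fin 2) R) gh.2) ∧
    (∀ g h : MvPowerSeries (Fin 2) R,
      p = msubst (![X 0 * (X 0 + X 1), X 1] : Fin 2 → MvPowerSeries (Fin 2) R) g +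
          X 0 * msubst (![X 0 * (X 0 + X 1), X 1] : Fin 2 → MvPowerSeries (Fin 2) R) h →
      (msubst (![X 0 + X 1, X 1] : Fin 2 → MvPowerSeries (Fin 2) R) p = p ↔
        X 1 * h = 0)) ∧
    (msubst (![X 0 + X 1, X 1] : Fin 2 → MvPowerSeries (Fin 2) R) p = p →
      ∃! g : MvPowerSeries (Fin 2) R,
        p = msubst (![X 0 * (X 0 + X 1), X 1] : Fin 2 → MvPowerSeries (Fin 2) R) g) := by
  have hEU := InvAux.decomp_exists_unique p
  refine ⟨hEU, ?_, ?_⟩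
  · intro g h hp
    constructor
    · intro hs
      have hd := InvAux.sigma_decomp p g h hp
      rw [hs] at hd
      have hz : X 1 * msubst (![X 0 * (X 0 + X 1), X 1] : Fin 2 → MvPowerSeries (Fin 2) R) h
          = 0 := left_eq_add.mp hd
      have h0 : h = 0 := InvAux.msubst_y_eq_zero (InvAux.X1_regular hz)
      rw [h0, mul_zero]
    · intro hX1h
      have h0 : h = 0 := InvAux.X1_regular hX1h
      subst h0
      have hd := InvAux.sigma_decomp p g 0 hp
      rw [InvAux.msubst_zero, mul_zero, add_zero] at hd
      exact hd
  · intro hs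
    obtain ⟨gh, hgh, huniq⟩ := hEU
    have hd := InvAux.sigma_decomp p gh.1 gh.2 hgh
    rw [hs] at hd
    have hz : X 1 * msubst (![X 0 * (X 0 + X 1), X 1] : Fin 2 → MvPowerSeries (Fin 2) R) gh.2
        = 0 := left_eq_add.mp hd
    have h2 : gh.2 = 0 := InvAux.msubst_y_eq_zero (InvAux.X1_regular hz)
    refine ⟨gh.1, ?_, ?_⟩
    · rw [hgh, h2, InvAux.msubst_zero, mul_zero, add_zero]
    · intro g' hg'
      have hpair : (g', (0 : MvPowerSeries (Fin 2) R)) = gh := by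
        apply huniq (g', 0)
        simpa [InvAux.msubst_zero] using hg'
      calc g' = (g', (0 : MvPowerSeries (Fin 2) R)).1 := rfl
        _ = gh.1 := by rw [hpair]
end

section
/- Over a ℤ/2-algebra R, the series b(x)·b(x+t) where b(x) = Σ bᵢ xⁱ (with b₀ invertible in a suitable completion) viewed in R[[t]][[x]], is invariant under x ↦ x+t, and hence equals Q(x(x+t)) for a unique power series Q over R[[t]] when t is regular. -/
open MvPowerSeries (X coeff)

namespace BProd
variable {R : Type*} [CommRing R] {m l : ℕ}

lemma fsum_eq_degree {n : ℕ} (d : Fin n →₀ ℕ) : (d.sum fun _ k => k) = Finsupp.degree d := by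
  rw [Finsupp.degree, Finsupp.sum]
  rfl

lemma degree_eq_sum_univ {n : ℕ} (d : Fin n →₀ ℕ) : Finsupp.degree d = ∑ i, d i := by
  rw [Finsupp.degree]
  exact Finset.sum_subset (Finset.subset_univ _) (by
    intro i _ hi
    simpa using (Finsupp.notMem_support_iff.mp hi))

/-- coefficient of msubst as given, with degree notation -/
lemma coeff_msubst_def (a : Fin m → MvPowerSeries (Fin l) R) (f : MvPowerSeries (Fin m) R)
    (e : Fin l →₀ ℕ) :
    coeff e (msubst a f) =
      ∑ d ∈ Fintype.piFinset (fun _ : Fin m => Finset.range (Finsupp.degree e + 1)),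
        coeff (Finsupp.equivFunOnFinite.symm d) f * coeff e (∏ i, a i ^ d i) := by
  rw [← fsum_eq_degree]
  rfl

lemma one_le_order {f : MvPowerSeries (Fin l) R} (hf : MvPowerSeries.constantCoeff f = 0) :
    1 ≤ f.order := by
  apply MvPowerSeries.nat_le_order
  intro d hd
  interval_cases h : Finsupp.degree d
  · rw [(Finsupp.degree_eq_zero_iff d).mp h]
    exact hf

lemma le_order_pow {f : MvPowerSeries (Fin l) R}
    (hf : MvPowerSeries.constantCoeff f = 0) (k : ℕ) :
    (k : ℕ∞) ≤ (f ^ k).order := by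
  induction k with
  | zero => simp
  | succ n ih =>
    calc ((n + 1 : ℕ) : ℕ∞) = (n : ℕ∞) + 1 := by push_cast; ring
    _ ≤ (f ^ n).order + f.order := add_le_add ih (one_le_order hf)
    _ ≤ ((f ^ n) * f).order := MvPowerSeries.le_order_mul
    _ = (f ^ (n+1)).order := by rw [pow_succ]

lemma le_order_prod_pow (a : Fin m → MvPowerSeries (Fin l) R)
    (ha : ∀ i, MvPowerSeries.constantCoeff (a i) = 0) (d : Fin m → ℕ) :
    ((∑ i, d i : ℕ) : ℕ∞) ≤ (∏ i, a i ^ d i).order := by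
  classical
  induction (Finset.univ : Finset (Fin m)) using Finset.cons_induction with
  | empty => simp
  | cons i s hi ih =>
    rw [Finset.sum_cons, Finset.prod_cons]
    push_cast
    calc ((d i : ℕ) : ℕ∞) + ∑ j ∈ s, ((d j : ℕ) : ℕ∞) ≤ (a i ^ d i).order + (∏ j ∈ s, a j ^ d j).order := by
          refine add_le_add (le_order_pow (ha i) _) ?_
          simpa using ih
    _ ≤ _ := MvPowerSeries.le_order_mul

/-- Key vanishing: coefficients of low degree of a product of positive-order series vanish. -/
lemma coeff_prod_pow_eq_zero {a : Fin m → MvPowerSeries (Fin l) R}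
    (ha : ∀ i, MvPowerSeries.constantCoeff (a i) = 0) {d : Fin m → ℕ} {e : Fin l →₀ ℕ}
    (h : Finsupp.degree e < ∑ i, d i) :
    coeff e (∏ i, a i ^ d i) = 0 := by
  apply MvPowerSeries.coeff_of_lt_order
  calc ((Finsupp.degree e : ℕ) : ℕ∞) < ((∑ i, d i : ℕ) : ℕ∞) := by exact_mod_cast h
  _ ≤ _ := le_order_prod_pow a ha d


/-- the box of Finsupps with all components ≤ N -/
noncomputable def box (m N : ℕ) : Finset (Fin m →₀ ℕ) :=
  (Fintype.piFinset fun _ : Fin m => Finset.range (N+1)).image ⇑Finsupp.equivFunOnFinite.symm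

lemma mem_box {N : ℕ} {d : Fin m →₀ ℕ} : d ∈ box m N ↔ ∀ i, d i ≤ N := by
  simp only [box, Finset.mem_image, Fintype.mem_piFinset, Finset.mem_range]
  constructor
  · rintro ⟨g, hg, rfl⟩ i
    simpa using Nat.lt_succ_iff.mp (hg i)
  · intro h
    exact ⟨⇑d, fun i => Nat.lt_succ_iff.mpr (h i), by simp⟩

lemma mem_box_of_degree_le {N : ℕ} {d : Fin m →₀ ℕ} (h : Finsupp.degree d ≤ N) :
    d ∈ box m N :=
  mem_box.mpr fun i => le_trans (Finsupp.le_degree i d) h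

lemma coeff_msubst_box (a : Fin m → MvPowerSeries (Fin l) R) (f : MvPowerSeries (Fin m) R)
    (e : Fin l →₀ ℕ) :
    coeff e (msubst a f) =
      ∑ d ∈ box m (Finsupp.degree e),
        coeff d f * coeff e (∏ i, a i ^ d i) := by
  rw [coeff_msubst_def, box, Finset.sum_image
    (fun x _ y _ h => Finsupp.equivFunOnFinite.symm.injective h)]
  rfl

/-- Flexible canonical form of the coefficients of `msubst`. -/
lemma coeff_msubst_eq_sum {a : Fin m → MvPowerSeries (Fin l) R}
    (ha : ∀ i, MvPowerSeries.constantCoeff (a i) = 0) (f : MvPowerSeries (Fin m) R)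
    (e : Fin l →₀ ℕ) (D : Finset (Fin m →₀ ℕ))
    (hD : ∀ d : Fin m →₀ ℕ, Finsupp.degree d ≤ Finsupp.degree e →
      coeff d f * coeff e (∏ i, a i ^ d i) ≠ 0 → d ∈ D) :
    coeff e (msubst a f) = ∑ d ∈ D, coeff d f * coeff e (∏ i, a i ^ d i) := by
  have hvan : ∀ d : Fin m →₀ ℕ, Finsupp.degree e < Finsupp.degree d →
      coeff e (∏ i, a i ^ (d : Fin m →₀ ℕ) i) = 0 := by
    intro d hd
    exact coeff_prod_pow_eq_zero ha (by rwa [← degree_eq_sum_univ])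
  rw [coeff_msubst_box]
  rw [Finset.sum_subset (Finset.subset_union_left (s₁ := box m (Finsupp.degree e)) (s₂ := D))
      (fun d _ hd => by
        rcases le_or_gt (Finsupp.degree d) (Finsupp.degree e) with h | h
        · exact absurd (mem_box_of_degree_le h) hd
        · rw [hvan d h, mul_zero]),
    Finset.sum_subset (Finset.subset_union_right (s₁ := box m (Finsupp.degree e)) (s₂ := D))
      (fun d _ hd => by
        rcases le_or_gt (Finsupp.degree d) (Finsupp.degree e) with h | h
        · exact not_not.mp (fun hne => hd (hD d h hne))
        · rw [hvan d h, mul_zero])]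

/-- coefficient of `aeval` of a polynomial into power series -/
lemma coeff_aeval (a : Fin m → MvPowerSeries (Fin l) R) (p : MvPolynomial (Fin m) R)
    (e : Fin l →₀ ℕ) :
    coeff e (MvPolynomial.aeval a p) =
      ∑ d ∈ p.support, p.coeff d * coeff e (∏ i, a i ^ d i) := by
  rw [MvPolynomial.aeval_def, MvPolynomial.eval₂_eq', map_sum]
  refine Finset.sum_congr rfl fun d _ => ?_
  rw [← MvPowerSeries.c_eq_algebraMap, MvPowerSeries.coeff_C_mul]

/-- Master lemma: the coefficient of `msubst a f` at `e` agrees with that of the evaluation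
of any polynomial matching `f` in all degrees up to the degree of `e`. -/
lemma coeff_msubst_aeval {a : Fin m → MvPowerSeries (Fin l) R}
    (ha : ∀ i, MvPowerSeries.constantCoeff (a i) = 0) {f : MvPowerSeries (Fin m) R}
    {p : MvPolynomial (Fin m) R} (e : Fin l →₀ ℕ)
    (hp : ∀ d : Fin m →₀ ℕ, Finsupp.degree d ≤ Finsupp.degree e → coeff d f = p.coeff d) :
    coeff e (msubst a f) = coeff e (MvPolynomial.aeval a p) := by
  have hvan : ∀ d : Fin m →₀ ℕ, Finsupp.degree e < Finsupp.degree d →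
      coeff e (∏ i, a i ^ (d : Fin m →₀ ℕ) i) = 0 := by
    intro d hd
    exact coeff_prod_pow_eq_zero ha (by rwa [← degree_eq_sum_univ])
  rw [coeff_msubst_eq_sum ha f e (p.support ∪ box m (Finsupp.degree e))
    (fun d hd _ => Finset.mem_union_right _ (mem_box_of_degree_le hd)), coeff_aeval]
  rw [← Finset.sum_subset (Finset.subset_union_left (s₁ := p.support)
      (s₂ := box m (Finsupp.degree e)))]
  · refine Finset.sum_congr rfl fun d _ => ?_
    rcases le_or_gt (Finsupp.degree d) (Finsupp.degree e) with h | h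
    · rw [hp d h]
    · rw [hvan d h, mul_zero, mul_zero]
  · intro d _ hd
    rcases le_or_gt (Finsupp.degree d) (Finsupp.degree e) with h | h
    · rw [hp d h, MvPolynomial.notMem_support_iff.mp hd, zero_mul]
    · rw [hvan d h, mul_zero]


section Psubst
variable {c : MvPowerSeries (Fin l) R} {b : PowerSeries R}

lemma coeff_psubst_def (b : PowerSeries R) (c : MvPowerSeries (Fin l) R) (e : Fin l →₀ ℕ) :
    coeff e (psubst b c) =
      ∑ k ∈ Finset.range (Finsupp.degree e + 1),
        PowerSeries.coeff k b * coeff e (c ^ k) := by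
  rw [← fsum_eq_degree]
  rfl

lemma coeff_pow_eq_zero (hc : MvPowerSeries.constantCoeff c = 0) {k : ℕ} {e : Fin l →₀ ℕ}
    (h : Finsupp.degree e < k) : coeff e (c ^ k) = 0 := by
  apply MvPowerSeries.coeff_of_lt_order
  exact lt_of_lt_of_le (by exact_mod_cast h) (le_order_pow hc k)

/-- Master lemma for `psubst`. -/
lemma coeff_psubst_aeval (hc : MvPowerSeries.constantCoeff c = 0) (p : Polynomial R)
    (e : Fin l →₀ ℕ) (hp : ∀ k ≤ Finsupp.degree e, PowerSeries.coeff k b = p.coeff k) :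
    coeff e (psubst b c) = coeff e (Polynomial.aeval c p) := by
  set N' := max (Finsupp.degree e + 1) (p.natDegree + 1) with hN'
  rw [Polynomial.aeval_eq_sum_range' (n := N') (lt_of_lt_of_le (Nat.lt_succ_self _)
    (le_max_right _ _)), map_sum, coeff_psubst_def]
  rw [Finset.sum_subset (Finset.range_subset_range.mpr (le_max_left _ _ : _ ≤ N'))
    (fun k _ hk => by
      rw [coeff_pow_eq_zero hc (by simpa [Nat.lt_succ_iff] using
        (Finset.mem_range.not.mp hk)), mul_zero])]
  refine Finset.sum_congr rfl fun k _ => ?_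
  rw [LinearMap.map_smul, smul_eq_mul]
  rcases le_or_gt k (Finsupp.degree e) with h | h
  · rw [hp k h]
  · rw [coeff_pow_eq_zero hc h, mul_zero, mul_zero]

end Psubst

lemma degree_add {n : ℕ} (x y : Fin n →₀ ℕ) :
    Finsupp.degree (x + y) = Finsupp.degree x + Finsupp.degree y := by
  simp [degree_eq_sum_univ, Finset.sum_add_distrib]

/-- truncation of a multivariate power series to a polynomial -/
noncomputable def truncP (f : MvPowerSeries (Fin m) R) (N : ℕ) : MvPolynomial (Fin m) R :=
  ∑ d ∈ box m N, MvPolynomial.monomial d (coeff d f)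

lemma coeff_truncP (f : MvPowerSeries (Fin m) R) (N : ℕ) (d : Fin m →₀ ℕ) :
    (truncP f N).coeff d = if d ∈ box m N then coeff d f else 0 := by
  rw [truncP, MvPolynomial.coeff_sum]
  simp_rw [MvPolynomial.coeff_monomial]
  exact Finset.sum_ite_eq' _ _ _

lemma truncP_matches (f : MvPowerSeries (Fin m) R) (N : ℕ) {d : Fin m →₀ ℕ}
    (h : Finsupp.degree d ≤ N) : coeff d f = (truncP f N).coeff d := by
  rw [coeff_truncP, if_pos (mem_box_of_degree_le h)]

lemma msubst_mul {a : Fin m → MvPowerSeries (Fin l) R}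
    (ha : ∀ i, MvPowerSeries.constantCoeff (a i) = 0) (f g : MvPowerSeries (Fin m) R) :
    msubst a (f * g) = msubst a f * msubst a g := by
  ext e
  set N := Finsupp.degree e with hN
  set pf := truncP f N
  set pg := truncP g N
  have hmatch : ∀ d : Fin m →₀ ℕ, Finsupp.degree d ≤ N →
      coeff d (f * g) = (pf * pg).coeff d := by
    intro d hd
    rw [MvPowerSeries.coeff_mul, MvPolynomial.coeff_mul]
    refine Finset.sum_congr rfl fun x hx => ?_
    have hx' := Finset.HasAntidiagonal.mem_antidiagonal.mp hx
    have h1 : Finsupp.degree x.1 ≤ N := by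
      refine le_trans ?_ hd; rw [← hx', degree_add]; exact Nat.le_add_right _ _
    have h2 : Finsupp.degree x.2 ≤ N := by
      refine le_trans ?_ hd; rw [← hx', degree_add]; exact Nat.le_add_left _ _
    rw [truncP_matches f N h1, truncP_matches g N h2]
  rw [coeff_msubst_aeval ha e hmatch, map_mul, MvPowerSeries.coeff_mul,
    MvPowerSeries.coeff_mul]
  refine Finset.sum_congr rfl fun x hx => ?_
  have hx' := Finset.HasAntidiagonal.mem_antidiagonal.mp hx
  have h1 : Finsupp.degree x.1 ≤ N := by
    rw [hN, ← hx', degree_add]; exact Nat.le_add_right _ _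
  have h2 : Finsupp.degree x.2 ≤ N := by
    rw [hN, ← hx', degree_add]; exact Nat.le_add_left _ _
  rw [coeff_msubst_aeval ha x.1 (fun d hd => truncP_matches f N (le_trans hd h1)),
    coeff_msubst_aeval ha x.2 (fun d hd => truncP_matches g N (le_trans hd h2))]

lemma msubst_coe {a : Fin m → MvPowerSeries (Fin l) R}
    (ha : ∀ i, MvPowerSeries.constantCoeff (a i) = 0) (p : MvPolynomial (Fin m) R) :
    msubst a ↑p = MvPolynomial.aeval a p := by
  ext e
  exact coeff_msubst_aeval ha e (fun d _ => MvPolynomial.coeff_coe p d)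

lemma constantCoeff_aeval {a : Fin m → MvPowerSeries (Fin l) R}
    (ha : ∀ i, MvPowerSeries.constantCoeff (a i) = 0) {p : MvPolynomial (Fin m) R}
    (hp : p.coeff 0 = 0) :
    MvPowerSeries.constantCoeff (MvPolynomial.aeval a p) = 0 := by
  rw [← MvPowerSeries.coeff_zero_eq_constantCoeff_apply, coeff_aeval]
  refine Finset.sum_eq_zero fun d hd => ?_
  by_cases h0 : d = 0
  · rw [h0, hp, zero_mul]
  · rw [coeff_prod_pow_eq_zero ha ?_, mul_zero]
    rw [← degree_eq_sum_univ, map_zero]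
    exact Nat.pos_of_ne_zero (fun hc => h0 ((Finsupp.degree_eq_zero_iff d).mp hc))

/-- Composition: substituting `a` into a `msubst` by polynomials. -/
lemma msubst_msubst {k : ℕ} {a : Fin m → MvPowerSeries (Fin l) R}
    (ha : ∀ i, MvPowerSeries.constantCoeff (a i) = 0)
    (cp : Fin k → MvPolynomial (Fin m) R) (hcp : ∀ i, (cp i).coeff 0 = 0)
    (Q : MvPowerSeries (Fin k) R) :
    msubst a (msubst (fun i => ↑(cp i)) Q) =
      msubst (fun i => MvPolynomial.aeval a (cp i)) Q := by
  have hc : ∀ i, MvPowerSeries.constantCoeff ((cp i : MvPowerSeries (Fin m) R)) = 0 := by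
    intro i
    rw [← MvPowerSeries.coeff_zero_eq_constantCoeff_apply, MvPolynomial.coeff_coe]
    exact hcp i
  have hac : ∀ i, MvPowerSeries.constantCoeff (MvPolynomial.aeval a (cp i)) = 0 :=
    fun i => constantCoeff_aeval ha (hcp i)
  ext e
  set N := Finsupp.degree e with hN
  set q := truncP Q N with hq
  have step1 : ∀ d : Fin m →₀ ℕ, Finsupp.degree d ≤ N →
      coeff d (msubst (fun i => ↑(cp i)) Q) = (MvPolynomial.aeval cp q).coeff d := by
    intro d hd
    rw [coeff_msubst_aeval hc d (fun d' hd' => truncP_matches Q N (le_trans (le_trans hd' hd) le_rfl))]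
    have : MvPolynomial.aeval (fun i => ((cp i : MvPowerSeries (Fin m) R))) q
        = ((MvPolynomial.aeval cp q : MvPolynomial (Fin m) R) : MvPowerSeries (Fin m) R) := by
      have := MvPolynomial.comp_aeval (f := cp)
        (φ := MvPolynomial.coeToMvPowerSeries.algHom (σ := Fin m) R)
      exact (congrFun (congrArg DFunLike.coe this) q).symm
    rw [this, MvPolynomial.coeff_coe]
  rw [coeff_msubst_aeval ha e step1,
    coeff_msubst_aeval hac e (fun d hd => truncP_matches Q N hd)]
  congr 1
  have := MvPolynomial.comp_aeval (f := cp) (φ := MvPolynomial.aeval (R := R) a)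
  exact (congrFun (congrArg DFunLike.coe this) q)

/-- Composition: substituting `a` into a `psubst` at a polynomial. -/
lemma msubst_psubst {a : Fin m → MvPowerSeries (Fin l) R}
    (ha : ∀ i, MvPowerSeries.constantCoeff (a i) = 0)
    (cp : MvPolynomial (Fin m) R) (hcp : cp.coeff 0 = 0) (b : PowerSeries R) :
    msubst a (psubst b ↑cp) = psubst b (MvPolynomial.aeval a cp) := by
  have hc : MvPowerSeries.constantCoeff ((cp : MvPowerSeries (Fin m) R)) = 0 := by
    rw [← MvPowerSeries.coeff_zero_eq_constantCoeff_apply, MvPolynomial.coeff_coe]; exact hcp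
  ext e
  set N := Finsupp.degree e with hN
  set pb := PowerSeries.trunc (N + 1) b with hpb
  have hmatchb : ∀ M, M ≤ N → ∀ k ≤ M, PowerSeries.coeff k b = pb.coeff k := by
    intro M hM k hk
    rw [hpb, PowerSeries.coeff_trunc, if_pos (by omega)]
  have step1 : ∀ d : Fin m →₀ ℕ, Finsupp.degree d ≤ N →
      coeff d (psubst b ↑cp) = (Polynomial.aeval cp pb).coeff d := by
    intro d hd
    rw [coeff_psubst_aeval hc pb d (hmatchb _ hd)]
    have : Polynomial.aeval ((cp : MvPowerSeries (Fin m) R)) pb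
        = ((Polynomial.aeval cp pb : MvPolynomial (Fin m) R) : MvPowerSeries (Fin m) R) := by
      exact (Polynomial.aeval_algHom_apply
        (MvPolynomial.coeToMvPowerSeries.algHom (σ := Fin m) R) cp pb)
    rw [this, MvPolynomial.coeff_coe]
  rw [coeff_msubst_aeval ha e step1,
    coeff_psubst_aeval (constantCoeff_aeval ha hcp) pb e (hmatchb _ le_rfl)]
  congr 1
  exact (Polynomial.aeval_algHom_apply (MvPolynomial.aeval (R := R) a) cp pb).symm


section Fin2

/-- the exponent finsupp `(e0, e1)` on `Fin 2` -/
noncomputable def fs (e0 e1 : ℕ) : Fin 2 →₀ ℕ :=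
  Finsupp.single (0 : Fin 2) e0 + Finsupp.single (1 : Fin 2) e1

@[simp] lemma fs_apply0 (e0 e1 : ℕ) : fs e0 e1 0 = e0 := by
  simp [fs, Finsupp.single_apply]

@[simp] lemma fs_apply1 (e0 e1 : ℕ) : fs e0 e1 1 = e1 := by
  simp [fs, Finsupp.single_apply]

lemma fs_eta (e : Fin 2 →₀ ℕ) : fs (e 0) (e 1) = e := by
  ext i
  match i with
  | 0 => simp
  | 1 => simp

lemma fs_inj {x y x' y' : ℕ} : fs x y = fs x' y' ↔ x = x' ∧ y = y' := by
  constructor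
  · intro h
    exact ⟨by simpa using DFunLike.congr_fun h 0, by simpa using DFunLike.congr_fun h 1⟩
  · rintro ⟨rfl, rfl⟩; rfl

lemma degree_fs (e0 e1 : ℕ) : Finsupp.degree (fs e0 e1) = e0 + e1 := by
  rw [degree_eq_sum_univ, Fin.sum_univ_two, fs_apply0, fs_apply1]

lemma X_pow_mul_X_pow (i j : ℕ) :
    (X 0 : MvPowerSeries (Fin 2) R) ^ i * X 1 ^ j =
      MvPowerSeries.monomial (fs i j) 1 := by
  rw [MvPowerSeries.X_pow_eq, MvPowerSeries.X_pow_eq, MvPowerSeries.monomial_mul_monomial,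
    one_mul, fs]

/-- The key monomial-coefficient computation for `u = X0·(X0+X1)`. -/
lemma coeff_u_pow (a c e0 e1 : ℕ) :
    coeff (fs e0 e1) ((X 0 * (X 0 + X 1) : MvPowerSeries (Fin 2) R) ^ a * X 1 ^ c) =
      if 2*a + c = e0 + e1 ∧ a ≤ e0 then (Nat.choose a (e0 - a) : R) else 0 := by
  have expand : (X 0 * (X 0 + X 1) : MvPowerSeries (Fin 2) R) ^ a * X 1 ^ c =
      ∑ j ∈ Finset.range (a+1),
        (Nat.choose a j : ℕ) • MvPowerSeries.monomial (fs (a+j) (a-j+c)) 1 := by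
    rw [mul_pow, add_pow, Finset.mul_sum, Finset.sum_mul]
    refine Finset.sum_congr rfl fun j hj => ?_
    have hj' := Nat.lt_succ_iff.mp (Finset.mem_range.mp hj)
    rw [nsmul_eq_mul, ← X_pow_mul_X_pow (R := R) (a+j) (a-j+c), pow_add, pow_add]
    ring
  rw [expand, map_sum]
  simp_rw [map_nsmul, MvPowerSeries.coeff_monomial, nsmul_eq_mul]
  by_cases hmain : 2*a + c = e0 + e1 ∧ a ≤ e0
  · by_cases h2 : e0 ≤ 2*a
    · rw [Finset.sum_eq_single_of_mem (e0 - a) (Finset.mem_range.mpr (by omega))]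
      · rw [if_pos (fs_inj.mpr ⟨by omega, by omega⟩), if_pos hmain, mul_one]
      · intro j _ hj
        rw [if_neg, mul_zero]
        intro hfs
        exact hj (by have := fs_inj.mp hfs; omega)
    · rw [if_pos hmain, Nat.choose_eq_zero_of_lt (by omega), Nat.cast_zero]
      refine Finset.sum_eq_zero fun j hj => ?_
      rw [if_neg, mul_zero]
      intro hfs
      have := fs_inj.mp hfs
      omega
  · rw [if_neg hmain]
    refine Finset.sum_eq_zero fun j hj => ?_
    have hj' := Nat.lt_succ_iff.mp (Finset.mem_range.mp hj)
    rw [if_neg, mul_zero]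
    intro hfs
    have := fs_inj.mp hfs
    exact hmain ⟨by omega, by omega⟩


lemma constCoeff_phi_fam :
    ∀ i, MvPowerSeries.constantCoeff
      ((![X 0 * (X 0 + X 1), X 1] : Fin 2 → MvPowerSeries (Fin 2) R) i) = 0 := by
  intro i
  fin_cases i <;> simp

lemma prod_phi_fam (d : Fin 2 →₀ ℕ) :
    (∏ i, (![X 0 * (X 0 + X 1), X 1] : Fin 2 → MvPowerSeries (Fin 2) R) i ^ d i) =
      (X 0 * (X 0 + X 1)) ^ d 0 * X 1 ^ d 1 := by
  rw [Fin.prod_univ_two]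
  simp

/-- Coefficient formula for substitution of `(X0(X0+X1), X1)`. -/
lemma coeff_phi (Q : MvPowerSeries (Fin 2) R) (e0 e1 : ℕ) :
    coeff (fs e0 e1) (msubst (![X 0 * (X 0 + X 1), X 1] : Fin 2 → MvPowerSeries (Fin 2) R) Q) =
      ∑ a ∈ Finset.range (e0+1), (if 2*a ≤ e0 + e1
        then (Nat.choose a (e0 - a) : R) * coeff (fs a (e0+e1-2*a)) Q else 0) := by
  classical
  set D := (Finset.range (e0+1)).image (fun a => fs a (e0+e1-2*a)) with hD
  rw [coeff_msubst_eq_sum constCoeff_phi_fam Q (fs e0 e1) D ?_]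
  · rw [hD, Finset.sum_image (fun x hx y hy h => (fs_inj.mp h).1)]
    refine Finset.sum_congr rfl fun a ha' => ?_
    have ha2 : a ≤ e0 := Nat.lt_succ_iff.mp (Finset.mem_range.mp ha')
    rw [prod_phi_fam, fs_apply0, fs_apply1, coeff_u_pow]
    by_cases h : 2*a ≤ e0 + e1
    · rw [if_pos ⟨by omega, ha2⟩, if_pos h, mul_comm]
    · rw [if_neg (by omega), if_neg h, mul_zero]
  · intro d _ hne
    rw [prod_phi_fam, ← fs_eta d, fs_apply0, fs_apply1, coeff_u_pow] at hne
    by_cases h : 2 * d 0 + d 1 = e0 + e1 ∧ d 0 ≤ e0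
    · rw [hD, Finset.mem_image]
      refine ⟨d 0, Finset.mem_range.mpr (by omega), ?_⟩
      rw [show e0 + e1 - 2 * d 0 = d 1 by omega, fs_eta]
    · rw [if_neg h, mul_zero] at hne
      exact absurd rfl hne

lemma msubst_sub (a : Fin m → MvPowerSeries (Fin l) R) (f g : MvPowerSeries (Fin m) R) :
    msubst a (f - g) = msubst a f - msubst a g := by
  ext e
  rw [map_sub, coeff_msubst_def, coeff_msubst_def, coeff_msubst_def, ← Finset.sum_sub_distrib]
  exact Finset.sum_congr rfl fun d _ => by rw [map_sub, sub_mul]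

lemma phi_eq_zero_iff {Q : MvPowerSeries (Fin 2) R}
    (hQ : msubst (![X 0 * (X 0 + X 1), X 1] : Fin 2 → MvPowerSeries (Fin 2) R) Q = 0) :
    Q = 0 := by
  have key : ∀ m n : ℕ, coeff (fs m n) Q = 0 := by
    intro m
    induction m using Nat.strong_induction_on with
    | _ m ih =>
      intro n
      have h := coeff_phi Q m (m + n)
      rw [hQ, map_zero] at h
      rw [Finset.sum_eq_single_of_mem m (Finset.self_mem_range_succ m)] at h
      · rw [if_pos (by omega), show m + (m+n) - 2*m = n by omega, Nat.sub_self,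
          Nat.choose_zero_right, Nat.cast_one, one_mul] at h
        exact h.symm
      · intro a ha' hne
        have ha2 : a < m := by
          have := Finset.mem_range.mp ha'; omega
        by_cases hc : 2*a ≤ m + (m+n)
        · rw [if_pos hc, ih a ha2, mul_zero]
        · rw [if_neg hc]
  ext d
  rw [← fs_eta d, key, map_zero]

lemma phi_injective :
    Function.Injective
      (msubst (![X 0 * (X 0 + X 1), X 1] : Fin 2 → MvPowerSeries (Fin 2) R)) := by
  intro Q Q' h
  have := phi_eq_zero_iff (Q := Q - Q') (by rw [msubst_sub, h, sub_self])
  rwa [sub_eq_zero] at this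

end Fin2

noncomputable def PS (F : ℕ → ℕ → R) : Bool → ℕ → ℕ → R
  | false, b, n => F (2*b) n
      - ∑ a ∈ (Finset.Ioc b (2*b)).attach,
          (if h : 2*(a:ℕ) ≤ 2*b + n then
            (Nat.choose a (2*b - a) : R) * PS F false a (2*b + n - 2*(a:ℕ)) else 0)
      - ∑ a ∈ (Finset.Ico b (2*b)).attach,
          (if h : 2*(a:ℕ)+1 ≤ 2*b + n then
            (Nat.choose a (2*b - 1 - a) : R) * PS F true a (2*b + n - 1 - 2*(a:ℕ)) else 0)
  | true, b, n => F (2*b+1) n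
      - ∑ a ∈ (Finset.Icc (b+1) (2*b+1)).attach,
          (if h : 2*(a:ℕ) ≤ 2*b+1 + n then
            (Nat.choose a (2*b+1 - a) : R) * PS F false a (2*b+1 + n - 2*(a:ℕ)) else 0)
      - ∑ a ∈ (Finset.Ioc b (2*b)).attach,
          (if h : 2*(a:ℕ)+1 ≤ 2*b+1 + n then
            (Nat.choose a (2*b+1 - 1 - a) : R) * PS F true a (2*b+1 + n - 1 - 2*(a:ℕ)) else 0)
termination_by _ _ n => n
decreasing_by
  · have := Finset.mem_Ioc.mp a.2; omega
  · have := Finset.mem_Ico.mp a.2; omega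
  · have := Finset.mem_Icc.mp a.2; omega
  · have := Finset.mem_Ioc.mp a.2; omega

lemma PS_spec (F : ℕ → ℕ → R) (e0 e1 : ℕ) :
    (∑ a ∈ Finset.range (e0+1), if 2*a ≤ e0+e1 then
        (Nat.choose a (e0-a) : R) * PS F false a (e0+e1-2*a) else 0)
    + (∑ a ∈ Finset.range e0, if 2*a+1 ≤ e0+e1 then
        (Nat.choose a (e0-1-a) : R) * PS F true a (e0+e1-1-2*a) else 0)
    = F e0 e1 := by
  rcases Nat.even_or_odd e0 with he | he
  · obtain ⟨b, rfl⟩ : ∃ b, e0 = 2*b := ⟨e0/2, by rcases he with ⟨r, hr⟩; omega⟩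
    rw [Finset.sum_eq_sum_sdiff_singleton_add (Finset.mem_range.mpr (by omega : b < 2*b+1))]
    rw [← Finset.sum_subset (by
        intro x hx
        have := Finset.mem_Ioc.mp hx
        exact Finset.mem_sdiff.mpr ⟨Finset.mem_range.mpr (by omega), by
          simp only [Finset.mem_singleton]; omega⟩
        : Finset.Ioc b (2*b) ⊆ Finset.range (2*b+1) \ {b})
      (by
        intro x hx hnx
        have h1 := Finset.mem_sdiff.mp hx
        have h2 := Finset.mem_range.mp h1.1
        have h3 := Finset.mem_singleton.not.mp h1.2
        have h4 := Finset.mem_Ioc.not.mp hnx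
        rw [show x.choose (2*b - x) = 0 from Nat.choose_eq_zero_of_lt (by omega),
          Nat.cast_zero, zero_mul, ite_self])]
    rw [← Finset.sum_subset (by
        intro x hx
        have := Finset.mem_Ico.mp hx
        exact Finset.mem_range.mpr (by omega)
        : Finset.Ico b (2*b) ⊆ Finset.range (2*b))
      (by
        intro x hx hnx
        have h2 := Finset.mem_range.mp hx
        have h4 := Finset.mem_Ico.not.mp hnx
        rw [show x.choose (2*b - 1 - x) = 0 from Nat.choose_eq_zero_of_lt (by omega),
          Nat.cast_zero, zero_mul, ite_self])]
    rw [if_pos (by omega : 2*b ≤ 2*b+e1), show 2*b - b = b by omega, Nat.choose_self,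
      Nat.cast_one, one_mul, show 2*b+e1-2*b = e1 by omega]
    rw [PS]
    simp only [dite_eq_ite]
    rw [Finset.sum_attach (Finset.Ioc b (2*b)) (fun x => if 2*x ≤ 2*b+e1 then
          (Nat.choose x (2*b-x) : R) * PS F false x (2*b+e1-2*x) else 0),
       Finset.sum_attach (Finset.Ico b (2*b)) (fun x => if 2*x+1 ≤ 2*b+e1 then
          (Nat.choose x (2*b-1-x) : R) * PS F true x (2*b+e1-1-2*x) else 0)]
    ring
  · obtain ⟨b, rfl⟩ : ∃ b, e0 = 2*b+1 := ⟨e0/2, by rcases he with ⟨r, hr⟩; omega⟩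
    rw [← Finset.sum_subset (by
        intro x hx
        have := Finset.mem_Icc.mp hx
        exact Finset.mem_range.mpr (by omega)
        : Finset.Icc (b+1) (2*b+1) ⊆ Finset.range (2*b+1+1))
      (by
        intro x hx hnx
        have h2 := Finset.mem_range.mp hx
        have h4 := Finset.mem_Icc.not.mp hnx
        rw [show x.choose (2*b+1 - x) = 0 from Nat.choose_eq_zero_of_lt (by omega),
          Nat.cast_zero, zero_mul, ite_self])]
    rw [Finset.sum_eq_sum_sdiff_singleton_add (Finset.mem_range.mpr (by omega : b < 2*b+1))]
    rw [← Finset.sum_subset (by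
        intro x hx
        have := Finset.mem_Ioc.mp hx
        exact Finset.mem_sdiff.mpr ⟨Finset.mem_range.mpr (by omega), by
          simp only [Finset.mem_singleton]; omega⟩
        : Finset.Ioc b (2*b) ⊆ Finset.range (2*b+1) \ {b})
      (by
        intro x hx hnx
        have h1 := Finset.mem_sdiff.mp hx
        have h2 := Finset.mem_range.mp h1.1
        have h3 := Finset.mem_singleton.not.mp h1.2
        have h4 := Finset.mem_Ioc.not.mp hnx
        rw [show x.choose (2*b+1 - 1 - x) = 0 from Nat.choose_eq_zero_of_lt (by omega),
          Nat.cast_zero, zero_mul, ite_self])]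
    rw [if_pos (by omega : 2*b+1 ≤ 2*b+1+e1), show 2*b+1 - 1 - b = b by omega, Nat.choose_self,
      Nat.cast_one, one_mul, show 2*b+1+e1-1-2*b = e1 by omega]
    rw [PS]
    simp only [dite_eq_ite]
    rw [Finset.sum_attach (Finset.Icc (b+1) (2*b+1)) (fun x => if 2*x ≤ 2*b+1+e1 then
          (Nat.choose x (2*b+1-x) : R) * PS F false x (2*b+1+e1-2*x) else 0),
       Finset.sum_attach (Finset.Ioc b (2*b)) (fun x => if 2*x+1 ≤ 2*b+1+e1 then
          (Nat.choose x (2*b+1-1-x) : R) * PS F true x (2*b+1+e1-1-2*x) else 0)]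
    ring


section Assembly

lemma coeff_X0_mul (g : MvPowerSeries (Fin 2) R) (e0 e1 : ℕ) :
    coeff (fs e0 e1) ((X 0 : MvPowerSeries (Fin 2) R) * g) =
      if 1 ≤ e0 then coeff (fs (e0-1) e1) g else 0 := by
  rw [← pow_one (X 0 : MvPowerSeries (Fin 2) R), MvPowerSeries.X_pow_eq,
    MvPowerSeries.coeff_monomial_mul]
  by_cases h : 1 ≤ e0
  · have hidx : fs e0 e1 - Finsupp.single (0 : Fin 2) 1 = fs (e0-1) e1 := by
      ext i
      rw [Finsupp.tsub_apply]
      fin_cases i <;> simp [Finsupp.single_apply]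
    rw [if_pos (by rw [Finsupp.single_le_iff, fs_apply0]; exact h), if_pos h, one_mul, hidx]
  · rw [if_neg, if_neg h]
    rw [Finsupp.single_le_iff, fs_apply0]
    omega

lemma X1_regular {g : MvPowerSeries (Fin 2) R}
    (h : (X 1 : MvPowerSeries (Fin 2) R) * g = 0) : g = 0 := by
  ext d
  have h1 : (X 1 : MvPowerSeries (Fin 2) R) = MvPowerSeries.monomial (Finsupp.single 1 1) 1 := by
    rw [← pow_one (X 1 : MvPowerSeries (Fin 2) R), MvPowerSeries.X_pow_eq]
  have := MvPowerSeries.coeff_add_monomial_mul (m := Finsupp.single (1 : Fin 2) 1) (n := d)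
    (φ := g) (1 : R)
  rw [← h1, h, map_zero, one_mul] at this
  rw [← this, map_zero]

/-- the P-part of the decomposition -/
noncomputable def Pser (F : MvPowerSeries (Fin 2) R) : MvPowerSeries (Fin 2) R :=
  fun d => PS (fun i j => coeff (fs i j) F) false (d 0) (d 1)

/-- the S-part of the decomposition -/
noncomputable def Sser (F : MvPowerSeries (Fin 2) R) : MvPowerSeries (Fin 2) R :=
  fun d => PS (fun i j => coeff (fs i j) F) true (d 0) (d 1)

lemma coeff_Pser (F : MvPowerSeries (Fin 2) R) (a k : ℕ) :
    coeff (fs a k) (Pser F) = PS (fun i j => coeff (fs i j) F) false a k := by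
  rw [show coeff (fs a k) (Pser F) = Pser F (fs a k) from rfl]
  rw [Pser, fs_apply0, fs_apply1]

lemma coeff_Sser (F : MvPowerSeries (Fin 2) R) (a k : ℕ) :
    coeff (fs a k) (Sser F) = PS (fun i j => coeff (fs i j) F) true a k := by
  rw [show coeff (fs a k) (Sser F) = Sser F (fs a k) from rfl]
  rw [Sser, fs_apply0, fs_apply1]

/-- Every power series decomposes as `P(u,t) + x·S(u,t)`. -/
lemma decomp (F : MvPowerSeries (Fin 2) R) :
    msubst (![X 0 * (X 0 + X 1), X 1] : Fin 2 → MvPowerSeries (Fin 2) R) (Pser F)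
      + X 0 * msubst (![X 0 * (X 0 + X 1), X 1] : Fin 2 → MvPowerSeries (Fin 2) R) (Sser F)
      = F := by
  ext e
  rw [← fs_eta e]
  generalize e 0 = e0
  generalize e 1 = e1
  rw [map_add, coeff_phi, coeff_X0_mul]
  rw [← PS_spec (fun i j => coeff (fs i j) F) e0 e1]
  congr 1
  · refine Finset.sum_congr rfl fun a _ => ?_
    rw [coeff_Pser]
  · by_cases h0 : 1 ≤ e0
    · rw [if_pos h0, coeff_phi, show e0 - 1 + 1 = e0 by omega]
      refine Finset.sum_congr rfl fun a _ => ?_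
      by_cases hc : 2*a+1 ≤ e0+e1
      · rw [if_pos (by omega), if_pos hc, show e0-1+e1-2*a = e0+e1-1-2*a by omega, coeff_Sser]
      · rw [if_neg (by omega), if_neg hc]
    · rw [if_neg h0, show e0 = 0 by omega, Finset.range_zero, Finset.sum_empty]

lemma msubst_add (a : Fin m → MvPowerSeries (Fin l) R) (f g : MvPowerSeries (Fin m) R) :
    msubst a (f + g) = msubst a f + msubst a g := by
  ext e
  rw [map_add, coeff_msubst_def, coeff_msubst_def, coeff_msubst_def, ← Finset.sum_add_distrib]
  exact Finset.sum_congr rfl fun d _ => by rw [map_add, add_mul]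

section Char2
variable [Algebra (ZMod 2) R]

lemma two_eq_zero : (2 : R) = 0 := by
  have h := map_natCast (algebraMap (ZMod 2) R) 2
  rw [show ((2:ℕ) : ZMod 2) = 0 by decide, map_zero] at h
  rw [show (2 : R) = ((2:ℕ) : R) by norm_num, ← h]

lemma X1_add_X1 : (X 1 : MvPowerSeries (Fin 2) R) + X 1 = 0 := by
  ext e
  rw [map_add, map_zero]
  have : coeff e (X 1 : MvPowerSeries (Fin 2) R) + coeff e (X 1) =
      (2 : R) * coeff e (X 1) := by ring
  rw [this, two_eq_zero, zero_mul]

lemma constCoeff_sigma_fam :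
    ∀ i, MvPowerSeries.constantCoeff
      ((![X 0 + X 1, X 1] : Fin 2 → MvPowerSeries (Fin 2) R) i) = 0 := by
  intro i
  fin_cases i <;> simp

/-- the polynomial family for σ -/
noncomputable def spoly : Fin 2 → MvPolynomial (Fin 2) R :=
  ![MvPolynomial.X 0 + MvPolynomial.X 1, MvPolynomial.X 1]

/-- the polynomial family for Φ -/
noncomputable def upoly : Fin 2 → MvPolynomial (Fin 2) R :=
  ![MvPolynomial.X 0 * (MvPolynomial.X 0 + MvPolynomial.X 1), MvPolynomial.X 1]

lemma spoly_coe :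
    (fun i => ((spoly i : MvPolynomial (Fin 2) R) : MvPowerSeries (Fin 2) R)) =
      (![X 0 + X 1, X 1] : Fin 2 → MvPowerSeries (Fin 2) R) := by
  funext i
  fin_cases i <;> simp [spoly, MvPolynomial.coe_add, MvPolynomial.coe_X]

lemma upoly_coe :
    (fun i => ((upoly i : MvPolynomial (Fin 2) R) : MvPowerSeries (Fin 2) R)) =
      (![X 0 * (X 0 + X 1), X 1] : Fin 2 → MvPowerSeries (Fin 2) R) := by
  funext i
  fin_cases i <;> simp [upoly, MvPolynomial.coe_add, MvPolynomial.coe_X, MvPolynomial.coe_mul]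

lemma spoly_coeff_zero : ∀ i, (spoly (R := R) i).coeff 0 = 0 := by
  intro i
  fin_cases i <;> simp [spoly]

lemma upoly_coeff_zero : ∀ i, (upoly (R := R) i).coeff 0 = 0 := by
  intro i
  fin_cases i <;> simp [upoly, MvPolynomial.coeff_mul]

lemma aeval_sigma_upoly :
    (fun i => MvPolynomial.aeval (![X 0 + X 1, X 1] : Fin 2 → MvPowerSeries (Fin 2) R)
      (upoly (R := R) i)) = (![X 0 * (X 0 + X 1), X 1] : Fin 2 → MvPowerSeries (Fin 2) R) := by
  funext i
  fin_cases i
  · show MvPolynomial.aeval (![X 0 + X 1, X 1] : Fin 2 → MvPowerSeries (Fin 2) R)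
        (MvPolynomial.X 0 * (MvPolynomial.X 0 + MvPolynomial.X 1)) = X 0 * (X 0 + X 1)
    rw [map_mul, map_add, MvPolynomial.aeval_X, MvPolynomial.aeval_X]
    show ((X 0 + X 1) * (X 0 + X 1 + X 1) : MvPowerSeries (Fin 2) R) = _
    rw [add_assoc, X1_add_X1, add_zero, mul_comm]
  · show MvPolynomial.aeval (![X 0 + X 1, X 1] : Fin 2 → MvPowerSeries (Fin 2) R)
        (MvPolynomial.X 1) = X 1
    rw [MvPolynomial.aeval_X]
    simp

/-- σ fixes the image of Φ. -/
lemma sigma_phi (Q : MvPowerSeries (Fin 2) R) :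
    msubst (![X 0 + X 1, X 1] : Fin 2 → MvPowerSeries (Fin 2) R)
      (msubst (![X 0 * (X 0 + X 1), X 1] : Fin 2 → MvPowerSeries (Fin 2) R) Q) =
    msubst (![X 0 * (X 0 + X 1), X 1] : Fin 2 → MvPowerSeries (Fin 2) R) Q := by
  conv_lhs => rw [← upoly_coe]
  rw [msubst_msubst constCoeff_sigma_fam upoly upoly_coeff_zero Q, aeval_sigma_upoly]

lemma sigma_X0 :
    msubst (![X 0 + X 1, X 1] : Fin 2 → MvPowerSeries (Fin 2) R) (X 0) = X 0 + X 1 := by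
  have h := msubst_coe constCoeff_sigma_fam (MvPolynomial.X (R := R) (0 : Fin 2))
  rw [MvPolynomial.coe_X, MvPolynomial.aeval_X] at h
  rw [h]
  rfl

lemma sigma_psubst_X0 (b : PowerSeries R) :
    msubst (![X 0 + X 1, X 1] : Fin 2 → MvPowerSeries (Fin 2) R) (psubst b (X 0)) =
      psubst b (X 0 + X 1) := by
  have h := msubst_psubst constCoeff_sigma_fam (MvPolynomial.X (R := R) (0 : Fin 2))
    (by simp) b
  rw [MvPolynomial.coe_X, MvPolynomial.aeval_X] at h
  rw [h]
  rfl

lemma sigma_psubst_X01 (b : PowerSeries R) :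
    msubst (![X 0 + X 1, X 1] : Fin 2 → MvPowerSeries (Fin 2) R) (psubst b (X 0 + X 1)) =
      psubst b (X 0) := by
  have h := msubst_psubst constCoeff_sigma_fam
    (MvPolynomial.X (R := R) (0 : Fin 2) + MvPolynomial.X 1) (by simp) b
  rw [MvPolynomial.coe_add, MvPolynomial.coe_X, MvPolynomial.coe_X, map_add,
    MvPolynomial.aeval_X, MvPolynomial.aeval_X] at h
  rw [h]
  have : ((![X 0 + X 1, X 1] : Fin 2 → MvPowerSeries (Fin 2) R) 0)
      + ((![X 0 + X 1, X 1] : Fin 2 → MvPowerSeries (Fin 2) R) 1) = X 0 := by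
    show (X 0 + X 1) + X 1 = _
    rw [add_assoc, X1_add_X1, add_zero]
  rw [this]

end Char2

end Assembly

end BProd

open BProd in
/-- Over a ℤ/2-algebra `R`, the series `b(x)·b(x+t)` where `b(x) = Σ bᵢ xⁱ` (with `b₀`
invertible), viewed in `R[[t]][[x]]`, is invariant under `x ↦ x+t`, and hence equals
`Q(x(x+t))` for a unique power series `Q` over `R[[t]]`.
Here variable `0` is `x` (resp. the new variable for `Q`) and variable `1` is `t`. -/
theorem b_product_invariant {R : Type*} [CommRing R] [Algebra (ZMod 2) R]
    (b : PowerSeries R) (hb0 : IsUnit (PowerSeries.constantCoeff b)) :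
    msubst (![X 0 + X 1, X 1] : Fin 2 → MvPowerSeries (Fin 2) R)
        (psubst b (X 0) * psubst b (X 0 + X 1)) =
      psubst b (X 0) * psubst b (X 0 + X 1) ∧
    ∃! Q : MvPowerSeries (Fin 2) R,
      msubst (![X 0 * (X 0 + X 1), X 1] : Fin 2 → MvPowerSeries (Fin 2) R) Q =
        psubst b (X 0) * psubst b (X 0 + X 1) := by
  classical
  set F := (psubst b (X 0) * psubst b (X 0 + X 1) : MvPowerSeries (Fin 2) R) with hF
  have hpart1 : msubst (![X 0 + X 1, X 1] : Fin 2 → MvPowerSeries (Fin 2) R) F = F := by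
    rw [hF, msubst_mul constCoeff_sigma_fam, sigma_psubst_X0, sigma_psubst_X01, mul_comm]
  refine ⟨hpart1, ?_⟩
  have hdecomp := decomp (R := R) F
  have hs : msubst (![X 0 + X 1, X 1] : Fin 2 → MvPowerSeries (Fin 2) R)
      (msubst (![X 0 * (X 0 + X 1), X 1] : Fin 2 → MvPowerSeries (Fin 2) R) (Pser F)
        + X 0 * msubst (![X 0 * (X 0 + X 1), X 1] : Fin 2 → MvPowerSeries (Fin 2) R) (Sser F))
      = msubst (![X 0 * (X 0 + X 1), X 1] : Fin 2 → MvPowerSeries (Fin 2) R) (Pser F)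
        + (X 0 + X 1) *
          msubst (![X 0 * (X 0 + X 1), X 1] : Fin 2 → MvPowerSeries (Fin 2) R) (Sser F) := by
    rw [msubst_add, msubst_mul constCoeff_sigma_fam, sigma_phi, sigma_phi, sigma_X0]
  have h1 := congrArg
    (msubst (![X 0 + X 1, X 1] : Fin 2 → MvPowerSeries (Fin 2) R)) hdecomp
  rw [hs, hpart1] at h1
  have hS0 : msubst (![X 0 * (X 0 + X 1), X 1] : Fin 2 → MvPowerSeries (Fin 2) R)
      (Sser F) = 0 := by
    apply X1_regular
    linear_combination h1 - hdecomp
  have hexist : msubst (![X 0 * (X 0 + X 1), X 1] : Fin 2 → MvPowerSeries (Fin 2) R)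
      (Pser F) = F := by
    rw [hS0, mul_zero, add_zero] at hdecomp
    exact hdecomp
  exact ⟨Pser F, hexist, fun Q' hQ' => phi_injective (hQ'.trans hexist.symm)⟩
end
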